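/- arXiv:2201.08077 — 9 statements merged into one kernel-verified Lean document; each statement's English description precedes it below -/
import Mathlib

section
/- Let m ≥ 1 be an integer, R > 0, and ζ = exp(2πi/m). Let Ψ : ℂ → ℂ be holomorphic on the region A = {z ∈ ℂ : |z| > R}, satisfy Ψ(ζz) = ζΨ(z) for all z ∈ A, and satisfy |Ψ(z)| → ∞ as |z| → ∞. Let n ≥ 1 be an integer, F a polynomial with complex coefficients, and (c_k)_{k≥1} a sequence of complex numbers such that for every z ∈ A the series Σ_{k≥1} c_k z^{−k} converges unconditionally (HasSum) with sum F(Ψ(z)) − z^n. Then c_k = 0 for every k ≥ 1 such that n + k is not divisible by m. -/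
/-!
Put `g z = F (Ψ z) - z ^ n = ∑ c_{k+1} z^{-(k+1)}`. Substituting `w = z⁻¹` turns `g` into `w` times
a power series in `w` with positive radius, so `g → 0` at infinity and `g` determines its
coefficients. The symmetry of `Ψ` gives `F (ζ Ψ z) - ζ ^ n F (Ψ z) = g (ζ z) - ζ ^ n g z → 0`, and
as `Ψ z → ∞` the polynomial `F (ζ w) - ζ ^ n F w` vanishes identically. Hence
`g (ζ z) = ζ ^ n g z`, and comparing coefficients gives `c_k (ζ^{-k} - ζ ^ n) = 0`, where
`ζ^{-k} = ζ ^ n` only if `m ∣ n + k`.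
-/

open Filter Topology Bornology Polynomial FormalMultilinearSeries

section InversePowerSeries

variable {𝕜 : Type*} [NontriviallyNormedField 𝕜] {R : ℝ} {a : ℕ → 𝕜} {f : 𝕜 → 𝕜}

lemma radius_ofScalars_pos_of_forall_hasSum_div_pow
    (h : ∀ z : 𝕜, R < ‖z‖ → HasSum (fun k ↦ a k / z ^ (k + 1)) (f z)) :
    0 < (ofScalars 𝕜 a).radius := by
  obtain ⟨z, hz⟩ := NormedField.exists_lt_norm 𝕜 (max R 0)
  have hz0 : z ≠ 0 := norm_pos_iff.mp ((le_max_right _ _).trans_lt hz)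
  have hterms := (h z ((le_max_left _ _).trans_lt hz)).summable.tendsto_atTop_zero.norm
  rw [norm_zero, ← zero_mul ‖z‖] at hterms
  refine lt_of_lt_of_le ?_ ((ofScalars 𝕜 a).le_radius_of_tendsto (r := ‖z⁻¹‖₊)
    ((hterms.mul_const ‖z‖).congr fun k ↦ ?_))
  · simpa using hz0
  · rw [ofScalars_norm, coe_nnnorm, norm_div, norm_inv, norm_pow, pow_succ, inv_pow]
    field_simp

variable [CompleteSpace 𝕜]

lemma eventually_apply_inv_eq_mul_sum_ofScalars
    (h : ∀ z : 𝕜, R < ‖z‖ → HasSum (fun k ↦ a k / z ^ (k + 1)) (f z)) :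
    ∀ᶠ w in 𝓝[≠] 0, f w⁻¹ = w * (ofScalars 𝕜 a).sum w := by
  have hball : ∀ᶠ w in 𝓝[≠] (0 : 𝕜), w ∈ Metric.eball 0 (ofScalars 𝕜 a).radius :=
    eventually_nhdsWithin_of_eventually_nhds
      (Metric.eball_mem_nhds _ (radius_ofScalars_pos_of_forall_hasSum_div_pow h))
  have hlarge : ∀ᶠ w in 𝓝[≠] (0 : 𝕜), R < ‖w⁻¹‖ :=
    (tendsto_inv₀_nhdsNE_zero (α := 𝕜)).eventually
      (tendsto_norm_cobounded_atTop.eventually_gt_atTop R)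
  filter_upwards [hball, hlarge, self_mem_nhdsWithin] with w hw hwR hw0
  have hsum := ((ofScalars 𝕜 a).hasSum hw).mul_left w
  refine (h _ hwR).unique (hsum.congr_fun fun k ↦ ?_)
  rw [ofScalars_apply_eq, smul_eq_mul, inv_pow, div_inv_eq_mul, pow_succ]
  ring

lemma tendsto_cobounded_of_forall_hasSum_div_pow
    (h : ∀ z : 𝕜, R < ‖z‖ → HasSum (fun k ↦ a k / z ^ (k + 1)) (f z)) :
    Tendsto f (cobounded 𝕜) (𝓝 0) := by
  have hcont : ContinuousAt (ofScalars 𝕜 a).sum 0 :=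
    ((ofScalars 𝕜 a).hasFPowerSeriesOnBall
      (radius_ofScalars_pos_of_forall_hasSum_div_pow h)).hasFPowerSeriesAt.continuousAt
  have hlim : Tendsto (fun w ↦ w * (ofScalars 𝕜 a).sum w) (𝓝[≠] 0) (𝓝 0) := by
    simpa using (tendsto_id.mul hcont.tendsto).mono_left nhdsWithin_le_nhds
  refine (hlim.comp tendsto_inv₀_cobounded').congr' ?_
  filter_upwards [tendsto_inv₀_cobounded'.eventually
    (eventually_apply_inv_eq_mul_sum_ofScalars h)] with z hz
  rw [Function.comp_apply, ← hz, inv_inv]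

lemma eq_zero_of_forall_hasSum_div_pow_zero
    (h : ∀ z : 𝕜, R < ‖z‖ → HasSum (fun k ↦ a k / z ^ (k + 1)) 0) : a = 0 := by
  have hpos := radius_ofScalars_pos_of_forall_hasSum_div_pow h
  have hps := ((ofScalars 𝕜 a).hasFPowerSeriesOnBall hpos).hasFPowerSeriesAt
  have hzero : (ofScalars 𝕜 a).sum =ᶠ[𝓝[≠] 0] 0 := by
    filter_upwards [eventually_apply_inv_eq_mul_sum_ofScalars h, self_mem_nhdsWithin]
      with w hw hw0
    exact (mul_eq_zero.mp hw.symm).resolve_left hw0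
  rw [hps.continuousAt.eventuallyEq_nhds_iff_eventuallyEq_nhdsNE (g := 0) continuousAt_const]
    at hzero
  exact (ofScalars_series_eq_zero 𝕜).mp (hps.eq_zero_of_eventually hzero)

lemma eq_zero_of_forall_hasSum_div_pow_of_apply_mul {ζ : 𝕜} (hζ : ‖ζ‖ = 1) {n : ℕ}
    (h : ∀ z : 𝕜, R < ‖z‖ → HasSum (fun k ↦ a k / z ^ (k + 1)) (f z))
    (hf : ∀ z : 𝕜, R < ‖z‖ → f (ζ * z) = ζ ^ n * f z) {k : ℕ} (hk : ζ ^ (n + k + 1) ≠ 1) :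
    a k = 0 := by
  have hζ0 : ζ ≠ 0 := norm_ne_zero_iff.mp (by rw [hζ]; exact one_ne_zero)
  have hb : (fun k ↦ a k * (1 - ζ ^ (n + k + 1)) / ζ ^ (k + 1)) = 0 := by
    refine eq_zero_of_forall_hasSum_div_pow_zero (R := R) fun z hz ↦ ?_
    have hζz : R < ‖ζ * z‖ := by rwa [norm_mul, hζ, one_mul]
    have hdiff := (h _ hζz).sub ((h z hz).mul_left (ζ ^ n))
    rw [hf z hz, sub_self] at hdiff
    refine hdiff.congr_fun fun j ↦ ?_
    -- `z = 0` is admissible when `R < 0`; both sides vanish there because `x / 0 = 0`.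
    rcases eq_or_ne z 0 with rfl | hz0
    · simp
    field_simp
    ring
  have hbk := congrFun hb k
  simp only [Pi.zero_apply, div_eq_zero_iff, mul_eq_zero, sub_eq_zero, pow_eq_zero_iff',
    hζ0, false_and, or_false] at hbk
  exact hbk.resolve_right (Ne.symm hk)

end InversePowerSeries

namespace Polynomial

variable {R : Type*} [NormedRing R] [IsAbsoluteValue (norm : R → ℝ)]

lemma eq_zero_of_tendsto_eval_nhds_zero {α : Type*} {l : Filter α} [l.NeBot] {u : α → R}
    (P : R[X]) (hu : Tendsto (‖u ·‖) l atTop) (hP : Tendsto (fun x ↦ P.eval (u x)) l (𝓝 0)) :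
    P = 0 := by
  rcases lt_or_ge 0 P.degree with hdeg | hdeg
  · exact absurd (by simpa using hP.norm)
      (not_tendsto_nhds_of_tendsto_atTop (P.tendsto_norm_atTop hdeg hu) 0)
  · rw [eq_C_of_degree_le_zero hdeg] at hP ⊢
    simpa using hP

lemma eval_mul_eq_pow_mul_eval_of_tendsto {𝕜 : Type*} [NontriviallyNormedField 𝕜]
    {ζ : 𝕜} (hζ : ζ ≠ 0) {n : ℕ} (F : 𝕜[X]) {Ψ : 𝕜 → 𝕜}
    (hsym : ∀ᶠ z in cobounded 𝕜, Ψ (ζ * z) = ζ * Ψ z)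
    (hΨ : Tendsto Ψ (cobounded 𝕜) (cobounded 𝕜))
    (hF : Tendsto (fun z ↦ F.eval (Ψ z) - z ^ n) (cobounded 𝕜) (𝓝 0)) (w : 𝕜) :
    F.eval (ζ * w) = ζ ^ n * F.eval w := by
  set P : 𝕜[X] := F.comp (C ζ * X) - C (ζ ^ n) * F
  suffices P = 0 by simpa [P, sub_eq_zero] using congrArg (eval w) this
  refine P.eq_zero_of_tendsto_eval_nhds_zero (tendsto_norm_atTop_iff_cobounded.mpr hΨ) ?_
  have hlim := (hF.comp (tendsto_mul_left_cobounded hζ)).sub (hF.const_mul (ζ ^ n))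
  rw [mul_zero, sub_zero] at hlim
  refine hlim.congr' ?_
  filter_upwards [hsym] with z hz
  simp only [Function.comp_apply, hz, P, eval_sub, eval_comp, eval_mul, eval_C, eval_X, mul_pow]
  ring

end Polynomial

theorem grunsky_vanish_of_rotational_symmetry_general
    (m : ℕ) (hm : 1 ≤ m) (R : ℝ)
    (ζ : ℂ) (hζ : ζ = Complex.exp (2 * Real.pi * Complex.I / m))
    (Ψ : ℂ → ℂ)
    (hsym : ∀ z : ℂ, R < ‖z‖ → Ψ (ζ * z) = ζ * Ψ z)
    (hinf : Tendsto (fun z : ℂ => ‖Ψ z‖) (comap norm atTop) atTop)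
    (n : ℕ) (F : Polynomial ℂ) (c : ℕ → ℂ)
    (hser : ∀ z : ℂ, R < ‖z‖ →
      HasSum (fun k : ℕ => c (k + 1) / z ^ (k + 1)) (F.eval (Ψ z) - z ^ n)) :
    ∀ k : ℕ, 1 ≤ k → ¬ (m ∣ (n + k)) → c k = 0 := by
  have hprim : IsPrimitiveRoot ζ m := hζ ▸ Complex.isPrimitiveRoot_exp m (by omega)
  rw [comap_norm_atTop, tendsto_norm_atTop_iff_cobounded] at hinf
  have hFζ : ∀ w, F.eval (ζ * w) = ζ ^ n * F.eval w :=
    F.eval_mul_eq_pow_mul_eval_of_tendsto (hprim.ne_zero (by omega))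
      (by filter_upwards [tendsto_norm_cobounded_atTop.eventually_gt_atTop R] using hsym) hinf
      (tendsto_cobounded_of_forall_hasSum_div_pow hser)
  intro k hk hdvd
  obtain ⟨j, rfl⟩ : ∃ j, k = j + 1 := ⟨k - 1, by omega⟩
  refine eq_zero_of_forall_hasSum_div_pow_of_apply_mul (hprim.norm'_eq_one (by omega)) hser
    (fun z hz ↦ ?_) (by rwa [Ne, add_assoc, hprim.pow_eq_one_iff_dvd])
  rw [hsym z hz, hFζ, mul_pow]
  ring

/-- For an `m`-fold rotationally symmetric exterior conformal map `Ψ`, the Grunsky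
coefficients `c_{n,k}` vanish unless `n + k ≡ 0 (mod m)`. -/
theorem grunsky_vanish_of_rotational_symmetry
    (m : ℕ) (hm : 1 ≤ m) (R : ℝ) (hR : 0 < R)
    (ζ : ℂ) (hζ : ζ = Complex.exp (2 * Real.pi * Complex.I / m))
    (Ψ : ℂ → ℂ)
    (hΨ : DifferentiableOn ℂ Ψ {z : ℂ | R < ‖z‖})
    (hsym : ∀ z : ℂ, R < ‖z‖ → Ψ (ζ * z) = ζ * Ψ z)
    (hinf : Tendsto (fun z : ℂ => ‖Ψ z‖) (comap norm atTop) atTop)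
    (n : ℕ) (hn : 1 ≤ n) (F : Polynomial ℂ) (c : ℕ → ℂ)
    (hser : ∀ z : ℂ, R < ‖z‖ →
      HasSum (fun k : ℕ => c (k + 1) / z ^ (k + 1)) (F.eval (Ψ z) - z ^ n)) :
    ∀ k : ℕ, 1 ≤ k → ¬ (m ∣ (n + k)) → c k = 0 :=
  grunsky_vanish_of_rotational_symmetry_general m hm R ζ hζ Ψ hsym hinf n F c hser
end

section
/- Let m ≥ 1 be an integer, R > 0, and ζ = exp(2πi/m). Let Ψ_D : ℂ → ℂ be holomorphic on {z ∈ ℂ : |z| > R}, satisfy Ψ_D(ζz) = ζΨ_D(z) for all |z| > R, and satisfy |Ψ_D(z)| → ∞ as |z| → ∞; let Ψ_Ω : ℂ → ℂ be holomorphic on {w ∈ ℂ : |w| > R^m}, and suppose Ψ_D(z)^m = Ψ_Ω(z^m) for all |z| > R. Let n ≥ 1 be an integer. Suppose F_D is a complex polynomial and (c^D_k)_{k≥1} are complex numbers such that for every z with |z| > R the series Σ_{k≥1} c^D_k z^{−k} converges unconditionally (HasSum) with sum F_D(Ψ_D(z)) − z^{mn}, and suppose F_Ω is a complex polynomial and (c^Ω_k)_{k≥1}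 are complex numbers such that for every w with |w| > R^m the series Σ_{k≥1} c^Ω_k w^{−k} converges unconditionally with sum F_Ω(Ψ_Ω(w)) − w^{n}. Then c^D_{mk} = c^Ω_k for every k ≥ 1. -/
/-!
Substituting `w = z ^ m` in the `Ω`-expansion and subtracting it from the `D`-expansion gives a
series in `1 / z` with coefficients `c^D_i - c^Ω_{i/m}` (zero when `m ∤ i`) and sum
`P (Ψ_D z)`, where `P = F_D - F_Ω ∘ X ^ m`, by `Ψ_D(z)^m = Ψ_Ω(z^m)`. Such a sum tends to `0` at
infinity, while `‖Ψ_D z‖ → ∞`; so the polynomial `P` vanishes, and uniqueness of the coefficients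
of a series in `1 / z` gives `c^D_{mk} = c^Ω_k`.
-/

open Filter Topology Bornology

section LaurentAtInfinity

variable {𝕜 : Type*} [RCLike 𝕜] {c : ℕ → 𝕜}

lemma tendsto_div_pow_succ_cobounded (a : 𝕜) (k : ℕ) :
    Tendsto (fun z : 𝕜 => a / z ^ (k + 1)) (cobounded 𝕜) (𝓝 0) := by
  simpa [div_eq_mul_inv] using
    (tendsto_inv₀_cobounded.comp (tendsto_pow_cobounded_cobounded k.succ_ne_zero)).const_mul a

/-- Summability in `𝕜` is absolute, so convergence at one point `z₀` dominates the series for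
`‖z‖ ≥ ‖z₀‖`. -/
lemma tendsto_zero_of_hasSum_div_pow {G : 𝕜 → 𝕜}
    (h : ∀ᶠ z in cobounded 𝕜, HasSum (fun k => c k / z ^ (k + 1)) (G z)) :
    Tendsto G (cobounded 𝕜) (𝓝 0) := by
  obtain ⟨z₀, hz₀, hz₀_ne⟩ := (h.and (eventually_ne_cobounded 0)).exists
  have hdom : ∀ᶠ z in cobounded 𝕜, ∀ k, ‖c k / z ^ (k + 1)‖ ≤ ‖c k / z₀ ^ (k + 1)‖ := by
    filter_upwards [tendsto_norm_cobounded_atTop.eventually_ge_atTop ‖z₀‖] with z hz k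
    simp only [norm_div, norm_pow]
    gcongr
  have hlim := tendsto_tsum_of_dominated_convergence (summable_norm_iff.mpr hz₀.summable)
    (fun k => tendsto_div_pow_succ_cobounded (c k) k) hdom
  rw [tsum_zero] at hlim
  exact hlim.congr' (h.mono fun z hz => hz.tsum_eq)

lemma hasSum_succ_div_pow {z a : 𝕜} (hz : z ≠ 0) (h : HasSum (fun k => c k / z ^ (k + 1)) a) :
    HasSum (fun k => c (k + 1) / z ^ (k + 1)) (z * a - c 0) := by
  have hterm : ∀ k, z * (c k / z ^ (k + 1)) = c k / z ^ k := fun k => by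
    rw [pow_succ]
    field_simp
  have hshift : HasSum (fun k => c k / z ^ k) (z * a) := by simpa only [hterm] using h.mul_left z
  simpa using (hasSum_nat_add_iff' 1).mpr hshift

lemma hasSum_succ_div_pow_neg_of_hasSum_zero
    (h : ∀ᶠ z in cobounded 𝕜, HasSum (fun k => c k / z ^ (k + 1)) 0) :
    ∀ᶠ z in cobounded 𝕜, HasSum (fun k => c (k + 1) / z ^ (k + 1)) (-c 0) := by
  filter_upwards [h, eventually_ne_cobounded 0] with z hz hz_ne
  simpa using hasSum_succ_div_pow hz_ne hz

lemma coeff_zero_eq_zero_of_hasSum_div_pow_zero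
    (h : ∀ᶠ z in cobounded 𝕜, HasSum (fun k => c k / z ^ (k + 1)) 0) : c 0 = 0 := by
  simpa using tendsto_nhds_unique tendsto_const_nhds
    (tendsto_zero_of_hasSum_div_pow (hasSum_succ_div_pow_neg_of_hasSum_zero h))

lemma eq_zero_of_hasSum_div_pow_zero
    (h : ∀ᶠ z in cobounded 𝕜, HasSum (fun k => c k / z ^ (k + 1)) 0) (j : ℕ) : c j = 0 := by
  induction j generalizing c with
  | zero => exact coeff_zero_eq_zero_of_hasSum_div_pow_zero h
  | succ j ih =>
    refine ih (c := fun k => c (k + 1)) ?_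
    simpa [coeff_zero_eq_zero_of_hasSum_div_pow_zero h] using
      hasSum_succ_div_pow_neg_of_hasSum_zero h

end LaurentAtInfinity

section ExpandCoeff

variable {K : Type*} {m : ℕ} {c : ℕ → K}

/-- If `c i` is the coefficient of `w ^ (-i)` in `f w`, then `expandCoeff m c i` is the
coefficient of `z ^ (-i)` in `f (z ^ m)`. -/
def expandCoeff [Zero K] (m : ℕ) (c : ℕ → K) (i : ℕ) : K := if m ∣ i then c (i / m) else 0

lemma expandCoeff_mul [Zero K] (hm : m ≠ 0) (k : ℕ) : expandCoeff m c (m * k) = c k := by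
  simp [expandCoeff, Nat.mul_div_cancel_left k (Nat.pos_of_ne_zero hm)]

lemma hasSum_expandCoeff_div_pow [Field K] [TopologicalSpace K] (hm : m ≠ 0) {z a : K}
    (h : HasSum (fun k => c (k + 1) / (z ^ m) ^ (k + 1)) a) :
    HasSum (fun j => expandCoeff m c (j + 1) / z ^ (j + 1)) a := by
  have hidx : ∀ k, m * (k + 1) - 1 + 1 = m * (k + 1) := fun k =>
    Nat.sub_add_cancel (Nat.one_le_iff_ne_zero.mpr (mul_ne_zero hm k.succ_ne_zero))
  have hinj : Function.Injective fun k => m * (k + 1) - 1 := fun a b hab => by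
    have := congrArg (· + 1) hab
    simp only [hidx] at this
    exact Nat.succ_injective (Nat.eq_of_mul_eq_mul_left (Nat.pos_of_ne_zero hm) this)
  refine (hinj.hasSum_iff fun j hj => ?_).mp ?_
  · suffices ¬ m ∣ j + 1 by simp [expandCoeff, this]
    rintro ⟨t, ht⟩
    obtain ⟨k, rfl⟩ : ∃ k, t = k + 1 := Nat.exists_eq_succ_of_ne_zero (by rintro rfl; simp at ht)
    exact hj ⟨k, by dsimp only; omega⟩
  · simpa [Function.comp_def, hidx, expandCoeff_mul hm, ← pow_mul] using h

end ExpandCoeff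

lemma Polynomial.eq_zero_of_tendsto_eval_zero {α 𝕜 : Type*} [NormedField 𝕜] {l : Filter α}
    [l.NeBot] {P : Polynomial 𝕜} {f : α → 𝕜} (hf : Tendsto (fun x => ‖f x‖) l atTop)
    (hP : Tendsto (fun x => P.eval (f x)) l (𝓝 0)) : P = 0 := by
  rcases lt_or_ge 0 P.degree with hdeg | hdeg
  · exact ((P.tendsto_norm_atTop hdeg hf).not_tendsto (disjoint_nhds_atTop 0).symm
      (tendsto_norm_zero.comp hP)).elim
  · rw [Polynomial.eq_C_of_degree_le_zero hdeg] at hP ⊢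
    simpa using hP

theorem grunsky_mth_root_transform_general
    (m : ℕ) (hm : 1 ≤ m) (R : ℝ)
    (ΨD ΨΩ : ℂ → ℂ)
    (hinf : Tendsto (fun z : ℂ => ‖ΨD z‖) (comap norm atTop) atTop)
    (hrel : ∀ z : ℂ, R < ‖z‖ → ΨD z ^ m = ΨΩ (z ^ m))
    (n : ℕ)
    (FD : Polynomial ℂ) (cD : ℕ → ℂ)
    (hserD : ∀ z : ℂ, R < ‖z‖ →
      HasSum (fun k : ℕ => cD (k + 1) / z ^ (k + 1)) (FD.eval (ΨD z) - z ^ (m * n)))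
    (FΩ : Polynomial ℂ) (cΩ : ℕ → ℂ)
    (hserΩ : ∀ w : ℂ, R ^ m < ‖w‖ →
      HasSum (fun k : ℕ => cΩ (k + 1) / w ^ (k + 1)) (FΩ.eval (ΨΩ w) - w ^ n)) :
    ∀ k : ℕ, 1 ≤ k → cD (m * k) = cΩ k := by
  rw [comap_norm_atTop] at hinf
  have hm0 : m ≠ 0 := by omega
  have hlarge : ∀ᶠ z in cobounded ℂ, R < ‖z‖ ∧ R ^ m < ‖z‖ ^ m :=
    (tendsto_norm_cobounded_atTop.eventually_gt_atTop R).and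
      (((tendsto_pow_atTop hm0).comp tendsto_norm_cobounded_atTop).eventually_gt_atTop (R ^ m))
  have hdiff : ∀ᶠ z in cobounded ℂ,
      HasSum (fun k => (cD (k + 1) - expandCoeff m cΩ (k + 1)) / z ^ (k + 1))
        ((FD - FΩ.comp (Polynomial.X ^ m)).eval (ΨD z)) := by
    filter_upwards [hlarge] with z ⟨hz, hzm⟩
    have hΩ := hasSum_expandCoeff_div_pow hm0 (hserΩ (z ^ m) (by rwa [norm_pow]))
    have hval : (FD - FΩ.comp (Polynomial.X ^ m)).eval (ΨD z) =
        (FD.eval (ΨD z) - z ^ (m * n)) - (FΩ.eval (ΨΩ (z ^ m)) - (z ^ m) ^ n) := by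
      simp only [Polynomial.eval_sub, Polynomial.eval_comp, Polynomial.eval_pow,
        Polynomial.eval_X, hrel z hz, ← pow_mul]
      ring
    simpa only [hval, sub_div] using (hserD z hz).sub hΩ
  have hP : FD - FΩ.comp (Polynomial.X ^ m) = 0 :=
    Polynomial.eq_zero_of_tendsto_eval_zero hinf (tendsto_zero_of_hasSum_div_pow hdiff)
  simp only [hP, Polynomial.eval_zero] at hdiff
  intro k hk
  have hcoeff := eq_zero_of_hasSum_div_pow_zero hdiff (m * k - 1)
  rwa [Nat.sub_add_cancel (Nat.one_le_iff_ne_zero.mpr (by positivity)), expandCoeff_mul hm0,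
    sub_eq_zero] at hcoeff

/-- Under the `m`-th-root transform `Ψ_D(z)^m = Ψ_Ω(z^m)`, the Grunsky coefficients
satisfy `c^D_{mn, mk} = c^Ω_{n, k}`. -/
theorem grunsky_mth_root_transform
    (m : ℕ) (hm : 1 ≤ m) (R : ℝ) (hR : 0 < R)
    (ζ : ℂ) (hζ : ζ = Complex.exp (2 * Real.pi * Complex.I / m))
    (ΨD ΨΩ : ℂ → ℂ)
    (hΨD : DifferentiableOn ℂ ΨD {z : ℂ | R < ‖z‖})
    (hsym : ∀ z : ℂ, R < ‖z‖ → ΨD (ζ * z) = ζ * ΨD z)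
    (hinf : Tendsto (fun z : ℂ => ‖ΨD z‖) (comap norm atTop) atTop)
    (hΨΩ : DifferentiableOn ℂ ΨΩ {w : ℂ | R ^ m < ‖w‖})
    (hrel : ∀ z : ℂ, R < ‖z‖ → ΨD z ^ m = ΨΩ (z ^ m))
    (n : ℕ) (hn : 1 ≤ n)
    (FD : Polynomial ℂ) (cD : ℕ → ℂ)
    (hserD : ∀ z : ℂ, R < ‖z‖ →
      HasSum (fun k : ℕ => cD (k + 1) / z ^ (k + 1)) (FD.eval (ΨD z) - z ^ (m * n)))
    (FΩ : Polynomial ℂ) (cΩ : ℕ → ℂ)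
    (hserΩ : ∀ w : ℂ, R ^ m < ‖w‖ →
      HasSum (fun k : ℕ => cΩ (k + 1) / w ^ (k + 1)) (FΩ.eval (ΨΩ w) - w ^ n)) :
    ∀ k : ℕ, 1 ≤ k → cD (m * k) = cΩ k :=
  grunsky_mth_root_transform_general m hm R ΨD ΨΩ hinf hrel n FD cD hserD FΩ cΩ hserΩ
end

section
/- Let m ≥ 1 be an integer, R > 0, and ζ = exp(2πi/m). Suppose Ψ : ℂ → ℂ is holomorphic on {w ∈ ℂ : |w| > R^m}, Φ : ℂ → ℂ is holomorphic on {z ∈ ℂ : |z| > R}, Φ(z)^m = Ψ(z^m) for all |z| > R, and Φ(z)/z → 1 as |z| → ∞. Then Φ(ζz) = ζΦ(z) for all z with |z| > R. -/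
open Filter Topology Bornology

/-! Since `Φ(ζz)^m = Ψ(ζ^m z^m) = Φ(z)^m`, the ratio `Φ(ζz)/Φ(z)` is an `m`-th root of unity for
large `|z|`; the normalisation `Φ(z) ~ z` forces it to tend to `ζ`, and a convergent function with
values in a finite set is eventually constant. So `Φ(ζz) = ζΦ(z)` near `∞`, and the identity
theorem propagates this to the connected domain `|z| > R`. -/

theorem Filter.Tendsto.eventually_eq_of_eventually_mem_finite {α X : Type*} [TopologicalSpace X]
    [T1Space X] {l : Filter α} {u : α → X} {x : X} {S : Set X} (hS : S.Finite)
    (hu : Tendsto u l (𝓝 x)) (hmem : ∀ᶠ a in l, u a ∈ S) : ∀ᶠ a in l, u a = x := by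
  have hnhds : (S \ {x})ᶜ ∈ 𝓝 x :=
    (hS.subset Set.sdiff_subset).isClosed.isOpen_compl.mem_nhds (by simp)
  filter_upwards [hmem, hu hnhds] with a haS hax
  by_contra hne
  exact hax ⟨haS, hne⟩

theorem Filter.Tendsto.eventually_eq_mul_of_pow_eq {α 𝕜 : Type*} [Field 𝕜] [TopologicalSpace 𝕜]
    [T1Space 𝕜] {l : Filter α} {f g : α → 𝕜} {ζ : 𝕜} {m : ℕ} (hm : m ≠ 0)
    (hlim : Tendsto (fun a => f a / g a) l (𝓝 ζ)) (hpow : ∀ᶠ a in l, f a ^ m = g a ^ m)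
    (hg : ∀ᶠ a in l, g a ≠ 0) : ∀ᶠ a in l, f a = ζ * g a := by
  have hroot : ∀ᶠ a in l, f a / g a ∈ (Polynomial.nthRootsFinset m (1 : 𝕜) : Set 𝕜) := by
    filter_upwards [hpow, hg] with a hfg hga
    simp [Nat.pos_of_ne_zero hm, div_pow, hfg, hga]
  filter_upwards [hlim.eventually_eq_of_eventually_mem_finite (Finset.finite_toSet _) hroot, hg]
    with a hζ hga
  rw [← hζ, div_mul_cancel₀ _ hga]

theorem tendsto_div_comp_mul_left_of_tendsto_div_self {𝕜 : Type*} [NormedDivisionRing 𝕜]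
    {f : 𝕜 → 𝕜} {a : 𝕜} (ha : a ≠ 0) (hf : Tendsto (fun z => f z / z) (cobounded 𝕜) (𝓝 1)) :
    Tendsto (fun z => f (a * z) / f z) (cobounded 𝕜) (𝓝 a) := by
  have hfa := hf.comp (tendsto_mul_left_cobounded ha)
  have hprod := (hfa.mul_const a).mul (hf.inv₀ one_ne_zero)
  simp only [Function.comp_def, one_mul, inv_one, mul_one] at hprod
  refine hprod.congr' ?_
  filter_upwards [eventually_ne_cobounded 0] with z hz
  simp only [div_eq_mul_inv, mul_inv_rev, inv_inv, mul_assoc, inv_mul_cancel_left₀ ha,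
    inv_mul_cancel_left₀ hz]

theorem Complex.isPreconnected_setOf_lt_norm (R : ℝ) : IsPreconnected {z : ℂ | R < ‖z‖} := by
  have himage : (fun p : ℝ × ℝ => (p.1 : ℂ) * exp (p.2 * I)) '' (Set.Ioi R ×ˢ Set.univ) =
      {z : ℂ | R < ‖z‖} := by
    ext z
    constructor
    · rintro ⟨⟨r, θ⟩, ⟨hr, -⟩, rfl⟩
      simp only [Set.mem_ofPred_eq, norm_mul, norm_exp_ofReal_mul_I, mul_one, norm_real,
        Real.norm_eq_abs]
      exact hr.trans_le (le_abs_self r)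
    · intro hz
      exact ⟨(‖z‖, arg z), ⟨hz, trivial⟩, norm_mul_exp_arg_mul_I z⟩
  rw [← himage]
  exact (isPreconnected_Ioi.prod isPreconnected_univ).image _ (by fun_prop)

theorem DifferentiableOn.eqOn_of_eventuallyEq_cobounded {E : Type*} [NormedAddCommGroup E]
    [NormedSpace ℂ E] [CompleteSpace E] {f g : ℂ → E} {U : Set ℂ} (hf : DifferentiableOn ℂ f U)
    (hg : DifferentiableOn ℂ g U) (hU : IsOpen U) (hUc : IsPreconnected U)
    (hUb : U ∈ cobounded ℂ) (hfg : f =ᶠ[cobounded ℂ] g) : Set.EqOn f g U := by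
  obtain ⟨r, -, hr⟩ := (Metric.hasBasis_cobounded_compl_closedBall (0 : ℂ)).mem_iff.1 hfg
  obtain ⟨z₀, hz₀r, hz₀U⟩ := nonempty_of_mem <| inter_mem
    ((Metric.hasBasis_cobounded_compl_closedBall (0 : ℂ)).mem_of_mem (i := r) trivial) hUb
  refine (hf.analyticOnNhd hU).eqOn_of_preconnected_of_eventuallyEq (hg.analyticOnNhd hU) hUc
    hz₀U ?_
  exact mem_of_superset (Metric.isClosed_closedBall.isOpen_compl.mem_nhds hz₀r) hr

theorem mth_root_transform_rotationally_symmetric_general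
    (m : ℕ) (hm : 1 ≤ m) (R : ℝ)
    (ζ : ℂ) (hζ : ζ = Complex.exp (2 * Real.pi * Complex.I / m))
    (Ψ Φ : ℂ → ℂ)
    (hΦ : DifferentiableOn ℂ Φ {z : ℂ | R < ‖z‖})
    (hpow : ∀ z : ℂ, R < ‖z‖ → Φ z ^ m = Ψ (z ^ m))
    (hlim : Tendsto (fun z : ℂ => Φ z / z) (comap norm atTop) (nhds 1)) :
    ∀ z : ℂ, R < ‖z‖ → Φ (ζ * z) = ζ * Φ z := by
  have hm0 : m ≠ 0 := Nat.one_le_iff_ne_zero.mp hm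
  have hζroot : IsPrimitiveRoot ζ m := hζ ▸ Complex.isPrimitiveRoot_exp m hm0
  have hmaps : Set.MapsTo (ζ * ·) {z : ℂ | R < ‖z‖} {z : ℂ | R < ‖z‖} := fun z hz => by
    simpa [hζroot.norm'_eq_one hm0] using hz
  have hUb : {z : ℂ | R < ‖z‖} ∈ cobounded ℂ :=
    tendsto_norm_cobounded_atTop.eventually_gt_atTop R
  rw [comap_norm_atTop] at hlim
  have hrot : (fun z => Φ (ζ * z)) =ᶠ[cobounded ℂ] fun z => ζ * Φ z := by
    refine (tendsto_div_comp_mul_left_of_tendsto_div_self (hζroot.ne_zero hm0) hlim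
      ).eventually_eq_mul_of_pow_eq hm0 ?_ ?_
    · filter_upwards [hUb] with z hz
      rw [hpow _ (hmaps hz), hpow z hz, mul_pow, hζroot.pow_eq_one, one_mul]
    · filter_upwards [hlim.eventually_ne one_ne_zero] with z hz hΦz
      simp [hΦz] at hz
  exact (hΦ.comp (differentiableOn_id.const_mul ζ) hmaps).eqOn_of_eventuallyEq_cobounded
    (hΦ.const_mul ζ) (isOpen_lt continuous_const continuous_norm)
    (Complex.isPreconnected_setOf_lt_norm R) hUb hrot

/-- The `m`-th-root transform `Φ` of an exterior map `Ψ` (i.e. `Φ(z)^m = Ψ(z^m)` with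
`Φ(z)/z → 1` at infinity) is `m`-fold rotationally symmetric: `Φ(ζz) = ζΦ(z)` for
`ζ = exp(2πi/m)`. -/
theorem mth_root_transform_rotationally_symmetric
    (m : ℕ) (hm : 1 ≤ m) (R : ℝ) (hR : 0 < R)
    (ζ : ℂ) (hζ : ζ = Complex.exp (2 * Real.pi * Complex.I / m))
    (Ψ Φ : ℂ → ℂ)
    (hΨ : DifferentiableOn ℂ Ψ {w : ℂ | R ^ m < ‖w‖})
    (hΦ : DifferentiableOn ℂ Φ {z : ℂ | R < ‖z‖})
    (hpow : ∀ z : ℂ, R < ‖z‖ → Φ z ^ m = Ψ (z ^ m))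
    (hlim : Tendsto (fun z : ℂ => Φ z / z) (comap norm atTop) (nhds 1)) :
    ∀ z : ℂ, R < ‖z‖ → Φ (ζ * z) = ζ * Φ z :=
  mth_root_transform_rotationally_symmetric_general m hm R ζ hζ Ψ Φ hΦ hpow hlim
end

section
/- Let R > 0 and let Ψ : ℂ → ℂ be holomorphic on {z ∈ ℂ : |z| > R} with Ψ(z)/z → 1 as |z| → ∞. Let n ≥ 0 be an integer, F a complex polynomial, and (c_k)_{k≥1} complex numbers such that for every z with |z| > R the series Σ_{k≥1} c_k z^{−k} converges unconditionally (HasSum) with sum F(Ψ(z)) − z^n. Let ρ > R and let w ∈ ℂ be such that Ψ(z) ≠ w for every z with |z| ≥ ρ. Then the circle integral ∮_{|z|=ρ} z^n · Ψ′(z)/(Ψ(z) − w) dz equals 2πi · F(w). -/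
/-!
Write `L = Ψ' / (Ψ - w)` and `S = F ∘ Ψ - zⁿ`, so that `zⁿ L = (F ∘ Ψ) L - S L`. Dividing
`F - F(w)` by `X - w` with quotient `Q` gives `(F ∘ Ψ) L = F(w) L + (Q ∘ Ψ) Ψ'`, and the last term
is the derivative of `P ∘ Ψ` for a primitive `P` of `Q`; hence `∮ (F ∘ Ψ) L = F(w) ∮ L`.
Since `Ψ(z) ~ z`, Cauchy's estimate on discs of radius `|z|/2` gives `Ψ' → 1`, so `L ~ 1/z`; and
`S → 0` by dominated convergence in its series. Thus `L - 1/z` and `S L` are `o(1/z)` and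
holomorphic on `|z| ≥ ρ`; their integrals over `|z| = r` do not depend on `r ≥ ρ` and are `O(ε)`
for large `r`, so they vanish. Therefore `∮ L = ∮ dz/z = 2πi` and `∮ zⁿ L = 2πi F(w)`.
-/

open Filter Metric Set Asymptotics Bornology Topology Complex Real

section

variable {E : Type*} [NormedAddCommGroup E] [NormedSpace ℂ E]

theorem circleIntegral_eq_zero_of_isLittleO_inv {f : ℂ → E} {ρ : ℝ} (hρ : 0 < ρ)
    (hf : DifferentiableOn ℂ f {z | ρ ≤ ‖z‖}) (ho : f =o[cobounded ℂ] (·⁻¹)) :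
    ∮ z in C(0, ρ), f z = 0 := by
  have hconst (r : ℝ) (hr : ρ ≤ r) : ∮ z in C(0, r), f z = ∮ z in C(0, ρ), f z :=
    circleIntegral_eq_of_differentiable_on_annulus_off_countable hρ hr countable_empty
      (hf.continuousOn.mono fun z hz => by simpa using hz.2) fun z hz =>
        hf.differentiableAt <| mem_of_superset
          ((isOpen_lt continuous_const continuous_norm).mem_nhds (by simpa using hz.1.2))
          fun _ h => le_of_lt (α := ℝ) h
  refine norm_le_zero_iff.1 <| le_of_forall_gt fun ε hε => ?_
  obtain ⟨r₀, hr₀⟩ := hasBasis_cobounded_norm.eventually_iff.1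
    (ho.def (div_pos hε (by positivity : (0 : ℝ) < 4 * π)))
  set r := max ρ r₀
  have hr : 0 < r := hρ.trans_le (le_max_left _ _)
  calc ‖∮ z in C(0, ρ), f z‖ = ‖∮ z in C(0, r), f z‖ := by rw [hconst r (le_max_left _ _)]
    _ ≤ 2 * π * r * (ε / (4 * π) * r⁻¹) := by
      refine circleIntegral.norm_integral_le_of_norm_le_const hr.le fun z hz => ?_
      rw [mem_sphere_zero_iff_norm] at hz
      simpa [hz] using hr₀.2 (show z ∈ {x | r₀ ≤ ‖x‖} by simp [hz, r])
    _ < ε := by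
      field_simp
      nlinarith [pi_pos]

theorem tendsto_deriv_cobounded_of_isLittleO_id {f : ℂ → E} {R : ℝ}
    (hf : DifferentiableOn ℂ f {z | R < ‖z‖}) (ho : f =o[cobounded ℂ] id) :
    Tendsto (deriv f) (cobounded ℂ) (𝓝 0) := by
  refine (isLittleO_one_iff ℂ).1 <| isLittleO_iff.2 fun ε hε => ?_
  obtain ⟨r₀, -, hr₀⟩ := hasBasis_cobounded_norm.eventually_iff.1
    (ho.def (by positivity : 0 < ε / 3))
  filter_upwards [eventually_cobounded_le_norm (2 * max r₀ R + 1), eventually_cobounded_le_norm 1]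
    with z hz hz₁
  have hR : R ≤ max r₀ R := le_max_right _ _
  have hr₀' : r₀ ≤ max r₀ R := le_max_left _ _
  have hball : ∀ ζ ∈ closedBall z (‖z‖ / 2), ‖z‖ / 2 ≤ ‖ζ‖ ∧ ‖ζ‖ ≤ 3 / 2 * ‖z‖ := by
    intro ζ hζ
    rw [mem_closedBall, dist_eq_norm] at hζ
    constructor
    · linarith [norm_sub_norm_le z ζ, norm_sub_rev z ζ]
    · linarith [norm_le_norm_add_norm_sub' ζ z]
  have hd : DiffContOnCl ℂ f (ball z (‖z‖ / 2)) :=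
    hf.diffContOnCl_ball fun ζ hζ => by
      show R < ‖ζ‖
      linarith [(hball ζ hζ).1]
  have hC : ∀ ζ ∈ sphere z (‖z‖ / 2), ‖f ζ‖ ≤ ε / 3 * (3 / 2 * ‖z‖) := by
    intro ζ hζ
    obtain ⟨hlo, hhi⟩ := hball ζ (sphere_subset_closedBall hζ)
    calc ‖f ζ‖ ≤ ε / 3 * ‖ζ‖ := hr₀ (show r₀ ≤ ‖ζ‖ by linarith)
      _ ≤ ε / 3 * (3 / 2 * ‖z‖) := by gcongr
  calc ‖deriv f z‖ ≤ ε / 3 * (3 / 2 * ‖z‖) / (‖z‖ / 2) :=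
        norm_deriv_le_of_forall_mem_sphere_norm_le (by linarith) hd hC
    _ = ε * ‖(1 : ℂ)‖ := by
      have : ‖z‖ ≠ 0 := by linarith
      field_simp
      norm_num

end

theorem circleIntegral_eq_two_pi_I_of_isEquivalent_inv {f : ℂ → ℂ} {ρ : ℝ} (hρ : 0 < ρ)
    (hf : DifferentiableOn ℂ f {z | ρ ≤ ‖z‖}) (he : f ~[cobounded ℂ] (·⁻¹)) :
    ∮ z in C(0, ρ), f z = 2 * π * I := by
  have hinv : DifferentiableOn ℂ (·⁻¹) {z : ℂ | ρ ≤ ‖z‖} := fun z hz =>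
    (differentiableAt_inv (norm_pos_iff.1 (hρ.trans_le hz))).differentiableWithinAt
  have hsphere : sphere (0 : ℂ) ρ ⊆ {z | ρ ≤ ‖z‖} := fun z hz => (mem_sphere_zero_iff_norm.1 hz).ge
  have hsub := circleIntegral.integral_sub ((hf.continuousOn.mono hsphere).circleIntegrable hρ.le)
    ((hinv.continuousOn.mono hsphere).circleIntegrable hρ.le)
  have hrem : ∮ z in C(0, ρ), (f z - z⁻¹) = 0 :=
    circleIntegral_eq_zero_of_isLittleO_inv hρ (hf.fun_sub hinv) he
  rw [hrem, eq_comm, sub_eq_zero] at hsub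
  simpa [hsub] using circleIntegral.integral_sub_center_inv 0 hρ.ne'

theorem tendsto_deriv_cobounded_of_isEquivalent_id {f : ℂ → ℂ} {R : ℝ}
    (hf : DifferentiableOn ℂ f {z | R < ‖z‖}) (he : f ~[cobounded ℂ] id) :
    Tendsto (deriv f) (cobounded ℂ) (𝓝 1) := by
  have hU : IsOpen {z : ℂ | R < ‖z‖} := isOpen_lt continuous_const continuous_norm
  have hderiv : ∀ᶠ z in cobounded ℂ, deriv (f - id) z + 1 = deriv f z := by
    filter_upwards [eventually_cobounded_le_norm (R + 1)] with z hz
    rw [deriv_sub (hf.differentiableAt (hU.mem_nhds (show R < ‖z‖ by linarith))) differentiableAt_id]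
    simp
  simpa using ((tendsto_deriv_cobounded_of_isLittleO_id (hf.sub differentiableOn_id) he).add_const
    1).congr' hderiv

theorem isEquivalent_deriv_div_sub_inv {f : ℂ → ℂ} {R : ℝ}
    (hf : DifferentiableOn ℂ f {z | R < ‖z‖}) (he : f ~[cobounded ℂ] id) (w : ℂ) :
    (fun z => deriv f z / (f z - w)) ~[cobounded ℂ] (·⁻¹) := by
  have hderiv : deriv f ~[cobounded ℂ] Function.const ℂ 1 :=
    (isEquivalent_const_iff_tendsto one_ne_zero).2
      (tendsto_deriv_cobounded_of_isEquivalent_id hf he)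
  exact (hderiv.div (he.sub_isLittleO (isLittleO_const_id_cobounded w))).congr_right
    (.of_eq (funext one_div))

theorem tendsto_cobounded_of_hasSum_div_pow {a : ℕ → ℂ} {S : ℂ → ℂ} {R : ℝ}
    (hS : ∀ z : ℂ, R < ‖z‖ → HasSum (fun k => a k / z ^ (k + 1)) (S z)) :
    Tendsto S (cobounded ℂ) (𝓝 0) := by
  set z₀ : ℂ := ((|R| + 1 : ℝ) : ℂ)
  have hz₀ : ‖z₀‖ = |R| + 1 := by
    rw [Complex.norm_real, Real.norm_of_nonneg (by positivity)]
  have hRz₀ : R < ‖z₀‖ := by linarith [le_abs_self R]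
  have hlim (k : ℕ) : Tendsto (fun z : ℂ => a k / z ^ (k + 1)) (cobounded ℂ) (𝓝 0) := by
    simpa [div_eq_mul_inv] using (tendsto_inv₀_cobounded.pow (k + 1)).const_mul (a k)
  -- unconditional summability in `ℂ` is absolute, and the series at `z₀` dominates the others
  have hdom := tendsto_tsum_of_dominated_convergence
    (summable_norm_iff.2 (hS z₀ hRz₀).summable) hlim <| by
      filter_upwards [eventually_cobounded_le_norm ‖z₀‖] with z hz k
      rw [norm_div, norm_div, norm_pow, norm_pow]
      gcongr
      exact pow_pos (by rw [hz₀]; positivity) _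
  refine (show Tendsto (fun z : ℂ => ∑' k, a k / z ^ (k + 1)) _ _ by simpa using hdom).congr' ?_
  filter_upwards [eventually_cobounded_le_norm ‖z₀‖] with z hz
  exact (hS z (hRz₀.trans_le hz)).tsum_eq

theorem circleIntegral_comp_mul_deriv_eq_zero {p Ψ : ℂ → ℂ} {c : ℂ} {R : ℝ} (hR : 0 ≤ R)
    (hp : Differentiable ℂ p) (hΨ : ∀ z ∈ sphere c R, DifferentiableAt ℂ Ψ z) :
    ∮ z in C(c, R), p (Ψ z) * deriv Ψ z = 0 := by
  obtain ⟨P, hP⟩ := hp.isExactOn_univ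
  exact circleIntegral.integral_eq_zero_of_hasDerivWithinAt hR fun z hz =>
    ((hP _ trivial).comp z (hΨ z hz).hasDerivAt).hasDerivWithinAt

theorem circleIntegral_eval_comp_mul_deriv_div_sub (F : Polynomial ℂ) {Ψ : ℂ → ℂ} {U : Set ℂ}
    {c w : ℂ} {R : ℝ} (hR : 0 ≤ R) (hU : IsOpen U) (hΨ : DifferentiableOn ℂ Ψ U)
    (hsU : sphere c R ⊆ U) (hw : ∀ z ∈ sphere c R, Ψ z ≠ w) :
    ∮ z in C(c, R), F.eval (Ψ z) * (deriv Ψ z / (Ψ z - w)) =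
      F.eval w * ∮ z in C(c, R), deriv Ψ z / (Ψ z - w) := by
  obtain ⟨Q, hQ⟩ := Polynomial.X_sub_C_dvd_sub_C_eval (a := w) (p := F)
  have hΨ_at {z : ℂ} (hz : z ∈ sphere c R) : DifferentiableAt ℂ Ψ z :=
    hΨ.differentiableAt (hU.mem_nhds (hsU hz))
  have hΨc : ContinuousOn Ψ (sphere c R) := hΨ.continuousOn.mono hsU
  have hΨ'c : ContinuousOn (deriv Ψ) (sphere c R) := (hΨ.deriv hU).continuousOn.mono hsU
  have hsplit : EqOn (fun z => F.eval (Ψ z) * (deriv Ψ z / (Ψ z - w)))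
      (fun z => F.eval w * (deriv Ψ z / (Ψ z - w)) + Q.eval (Ψ z) * deriv Ψ z) (sphere c R) := by
    intro z hz
    have hQz := congrArg (Polynomial.eval (Ψ z)) hQ
    simp only [Polynomial.eval_sub, Polynomial.eval_C, Polynomial.eval_mul, Polynomial.eval_X] at hQz
    have hΨw : Ψ z - w ≠ 0 := sub_ne_zero.2 (hw z hz)
    field_simp
    linear_combination deriv Ψ z * hQz
  have hL : CircleIntegrable (fun z => F.eval w * (deriv Ψ z / (Ψ z - w))) c R :=
    (continuousOn_const.mul (hΨ'c.div (hΨc.sub continuousOn_const) fun z hz =>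
      sub_ne_zero.2 (hw z hz))).circleIntegrable hR
  have hQΨ : CircleIntegrable (fun z => Q.eval (Ψ z) * deriv Ψ z) c R :=
    ((Q.continuous.comp_continuousOn hΨc).mul hΨ'c).circleIntegrable hR
  rw [circleIntegral.integral_congr hR hsplit, circleIntegral.integral_add hL hQΨ,
    circleIntegral.integral_const_mul,
    circleIntegral_comp_mul_deriv_eq_zero hR Q.differentiable fun z hz => hΨ_at hz, add_zero]

/-- The Cauchy-type circle integral of `z^n Ψ'(z)/(Ψ(z) - w)` over `|z| = ρ` equals
`2πi` times the value at `w` of the `n`-th Faber polynomial `F` of `Ψ`. -/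
theorem circleIntegral_faber_polynomial
    (R : ℝ) (hR : 0 < R) (Ψ : ℂ → ℂ)
    (hΨ : DifferentiableOn ℂ Ψ {z : ℂ | R < ‖z‖})
    (hlim : Tendsto (fun z : ℂ => Ψ z / z) (comap norm atTop) (nhds 1))
    (n : ℕ) (F : Polynomial ℂ) (c : ℕ → ℂ)
    (hser : ∀ z : ℂ, R < ‖z‖ →
      HasSum (fun k : ℕ => c (k + 1) / z ^ (k + 1)) (F.eval (Ψ z) - z ^ n))
    (ρ : ℝ) (hρ : R < ρ) (w : ℂ)
    (hw : ∀ z : ℂ, ρ ≤ ‖z‖ → Ψ z ≠ w) :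
    (∮ z in C(0, ρ), z ^ n * deriv Ψ z / (Ψ z - w)) =
      2 * Real.pi * Complex.I * F.eval w := by
  rw [comap_norm_atTop] at hlim
  have hρ0 : 0 < ρ := hR.trans hρ
  have hU : IsOpen {z : ℂ | R < ‖z‖} := isOpen_lt continuous_const continuous_norm
  have hext : {z : ℂ | ρ ≤ ‖z‖} ⊆ {z | R < ‖z‖} := fun z hz => hρ.trans_le hz
  have hsphere : sphere (0 : ℂ) ρ ⊆ {z | ρ ≤ ‖z‖} := fun z hz => (mem_sphere_zero_iff_norm.1 hz).ge
  have hint {f : ℂ → ℂ} (hf : DifferentiableOn ℂ f {z | ρ ≤ ‖z‖}) : CircleIntegrable f 0 ρ :=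
    (hf.continuousOn.mono hsphere).circleIntegrable hρ0.le
  have hFΨ : DifferentiableOn ℂ (fun z => F.eval (Ψ z)) {z | ρ ≤ ‖z‖} :=
    F.differentiable.comp_differentiableOn (hΨ.mono hext)
  have hS : DifferentiableOn ℂ (fun z => F.eval (Ψ z) - z ^ n) {z | ρ ≤ ‖z‖} :=
    hFΨ.fun_sub (differentiableOn_pow n)
  have hL : DifferentiableOn ℂ (fun z => deriv Ψ z / (Ψ z - w)) {z | ρ ≤ ‖z‖} :=
    ((hΨ.deriv hU).mono hext).div ((hΨ.mono hext).sub_const w) fun z hz => sub_ne_zero.2 (hw z hz)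
  have hL_equiv := isEquivalent_deriv_div_sub_inv hΨ (isEquivalent_of_tendsto_one hlim) w
  have hSL : (fun z => (F.eval (Ψ z) - z ^ n) * (deriv Ψ z / (Ψ z - w))) =o[cobounded ℂ] (·⁻¹) := by
    simpa using ((isLittleO_one_iff ℂ).2 (tendsto_cobounded_of_hasSum_div_pow hser)).mul_isBigO
      hL_equiv.isBigO
  calc (∮ z in C(0, ρ), z ^ n * deriv Ψ z / (Ψ z - w))
      = (∮ z in C(0, ρ), F.eval (Ψ z) * (deriv Ψ z / (Ψ z - w))) -
          ∮ z in C(0, ρ), (F.eval (Ψ z) - z ^ n) * (deriv Ψ z / (Ψ z - w)) := by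
        rw [← circleIntegral.integral_sub (hint (hFΨ.fun_mul hL)) (hint (hS.fun_mul hL))]
        congr 1
        funext z
        ring
    _ = 2 * π * I * F.eval w := by
      rw [circleIntegral_eval_comp_mul_deriv_div_sub F hρ0.le hU hΨ (hsphere.trans hext)
          fun z hz => hw z (hsphere hz),
        circleIntegral_eq_two_pi_I_of_isEquivalent_inv hρ0 hL hL_equiv,
        circleIntegral_eq_zero_of_isLittleO_inv hρ0 (hS.fun_mul hL) hSL]
      ring
end

section
/- Let R > 0 and let Ψ : ℂ → ℂ be holomorphic on {z ∈ ℂ : |z| > R} with Ψ(z)/z → 1 as |z| → ∞. Let ρ > R and let w ∈ ℂ be such that Ψ(z) ≠ w for every z with |z| ≥ ρ. Then for every integer n ≥ 1, the circle integral ∮_{|z|=ρ} z^{−n} · Ψ′(z)/(Ψ(z) − w) dz equals 0. -/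
/-!
The integrand `f z = z ^ (-n) * Ψ' z / (Ψ z - w)` is holomorphic on `ρ ≤ ‖z‖`, so its integral
over the circle of radius `r` is the same for every `r ≥ ρ`. Near infinity `Ψ'` is bounded (Cauchy
estimate on the disc of radius `‖z‖ / 2`, using `‖Ψ z‖ ≤ 2 ‖z‖`) and `z / (Ψ z - w) → 1`, so
`z * f z → 0` when `n ≥ 1`. The integral over the circle of radius `r` is at most
`2π · sup_{‖z‖ = r} ‖z * f z‖`, which tends to `0`.
-/

open Filter Metric Set Bornology Topology

section

variable {𝕜 : Type*} [NormedField 𝕜] {g : 𝕜 → 𝕜}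

lemma eventually_norm_le_mul_norm_of_tendsto_div_id {c : ℝ} (hc : 1 < c)
    (hg : Tendsto (fun z => g z / z) (cobounded 𝕜) (𝓝 1)) :
    ∀ᶠ z in cobounded 𝕜, ‖g z‖ ≤ c * ‖z‖ := by
  have hlt : ∀ᶠ z in cobounded 𝕜, ‖g z / z‖ < c :=
    hg.norm.eventually (gt_mem_nhds (by simpa using hc))
  filter_upwards [hlt, eventually_ne_cobounded 0] with z hz hz0
  rw [norm_div, div_lt_iff₀ (norm_pos_iff.2 hz0)] at hz
  exact hz.le

lemma tendsto_id_div_sub_const_of_tendsto_div_id (w : 𝕜)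
    (hg : Tendsto (fun z => g z / z) (cobounded 𝕜) (𝓝 1)) :
    Tendsto (fun z => z / (g z - w)) (cobounded 𝕜) (𝓝 1) := by
  have hw : Tendsto (fun z => w / z) (cobounded 𝕜) (𝓝 0) := by
    simpa [div_eq_mul_inv] using tendsto_inv₀_cobounded.const_mul w
  have hsub : Tendsto (fun z => (g z - w) / z) (cobounded 𝕜) (𝓝 1) := by
    simpa [sub_div] using hg.sub hw
  simpa using hsub.inv₀ one_ne_zero

end

section

variable {E : Type*} [NormedAddCommGroup E] [NormedSpace ℂ E]

lemma eventually_norm_deriv_le_of_norm_le_mul_norm {f : ℂ → E} {C : ℝ}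
    (hf : ∀ᶠ z in cobounded ℂ, DifferentiableAt ℂ f z)
    (hC : ∀ᶠ z in cobounded ℂ, ‖f z‖ ≤ C * ‖z‖) :
    ∀ᶠ z in cobounded ℂ, ‖deriv f z‖ ≤ 3 * C := by
  obtain ⟨A, -, hA⟩ := hasBasis_cobounded_norm.eventually_iff.1 (hf.and hC)
  filter_upwards [eventually_cobounded_le_norm (2 * A), eventually_ne_cobounded 0]
    with z hzA hz0
  have hr : 0 < ‖z‖ / 2 := by positivity
  have hball : ∀ ζ ∈ closedBall z (‖z‖ / 2),
      (DifferentiableAt ℂ f ζ ∧ ‖f ζ‖ ≤ C * ‖ζ‖) ∧ ‖ζ‖ ≤ 3 / 2 * ‖z‖ := by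
    intro ζ hζ
    rw [mem_closedBall, dist_eq_norm] at hζ
    have hζA : A ≤ ‖ζ‖ := by linarith [norm_sub_norm_le z ζ, norm_sub_rev ζ z]
    exact ⟨hA hζA, by linarith [norm_sub_norm_le ζ z]⟩
  have hC0 : 0 ≤ C := by
    have := (hball z (mem_closedBall_self hr.le)).1.2
    exact nonneg_of_mul_nonneg_left ((norm_nonneg _).trans this) (norm_pos_iff.2 hz0)
  have hdc : DiffContOnCl ℂ f (ball z (‖z‖ / 2)) :=
    DifferentiableOn.diffContOnCl_ball
      (fun ζ hζ => (hball ζ hζ).1.1.differentiableWithinAt) subset_rfl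
  have hsphere : ∀ ζ ∈ sphere z (‖z‖ / 2), ‖f ζ‖ ≤ C * (3 / 2 * ‖z‖) := fun ζ hζ =>
    have hζ := hball ζ (sphere_subset_closedBall hζ)
    hζ.1.2.trans (mul_le_mul_of_nonneg_left hζ.2 hC0)
  calc ‖deriv f z‖ ≤ C * (3 / 2 * ‖z‖) / (‖z‖ / 2) :=
        Complex.norm_deriv_le_of_forall_mem_sphere_norm_le hr hdc hsphere
    _ = 3 * C := by field_simp

lemma circleIntegral_eq_zero_of_tendsto_smul_cobounded {f : ℂ → E} {ρ : ℝ} (hρ : 0 < ρ)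
    (hf : ∀ z : ℂ, ρ ≤ ‖z‖ → DifferentiableAt ℂ f z)
    (hdecay : Tendsto (fun z => z • f z) (cobounded ℂ) (𝓝 0)) :
    ∮ z in C(0, ρ), f z = 0 := by
  have hradius : ∀ r, ρ ≤ r → ∮ z in C(0, r), f z = ∮ z in C(0, ρ), f z := by
    intro r hr
    refine Complex.circleIntegral_eq_of_differentiable_on_annulus_off_countable hρ hr
      countable_empty (fun z hz => ?_) (fun z hz => hf z ?_)
    · refine (hf z ?_).continuousAt.continuousWithinAt
      simpa using hz.2
    · exact (by simpa using hz.1.2 : ρ < ‖z‖).le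
  refine eq_of_forall_dist_le fun ε hε => ?_
  have hδ : 0 < ε / (2 * Real.pi) := by positivity
  obtain ⟨A, -, hA⟩ := hasBasis_cobounded_norm.eventually_iff.1
    (hdecay.eventually (closedBall_mem_nhds 0 hδ))
  set r := max ρ A
  have hr : 0 < r := lt_max_of_lt_left hρ
  have hsphere : ∀ z ∈ sphere (0 : ℂ) r, ‖f z‖ ≤ ε / (2 * Real.pi) / r := by
    intro z hz
    have hzr : ‖z‖ = r := by simpa using hz
    have := hA (show A ≤ ‖z‖ from hzr ▸ le_max_right ρ A)
    rw [dist_zero_right, norm_smul, hzr] at this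
    rwa [le_div_iff₀ hr, mul_comm]
  calc dist (∮ z in C(0, ρ), f z) 0 = ‖∮ z in C(0, r), f z‖ := by
        rw [dist_zero_right, hradius r (le_max_left ρ A)]
    _ ≤ 2 * Real.pi * r * (ε / (2 * Real.pi) / r) :=
        circleIntegral.norm_integral_le_of_norm_le_const hr.le hsphere
    _ = ε := by field_simp

end

/-- The Cauchy-type circle integral of `z^{-n} Ψ'(z)/(Ψ(z) - w)` over `|z| = ρ`
vanishes for every `n ≥ 1`. -/
theorem circleIntegral_negative_power_eq_zero
    (R : ℝ) (hR : 0 < R) (Ψ : ℂ → ℂ)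
    (hΨ : DifferentiableOn ℂ Ψ {z : ℂ | R < ‖z‖})
    (hlim : Tendsto (fun z : ℂ => Ψ z / z) (comap norm atTop) (nhds 1))
    (ρ : ℝ) (hρ : R < ρ) (w : ℂ)
    (hw : ∀ z : ℂ, ρ ≤ ‖z‖ → Ψ z ≠ w) :
    ∀ n : ℕ, 1 ≤ n →
      (∮ z in C(0, ρ), z ^ (-(n : ℤ)) * deriv Ψ z / (Ψ z - w)) = 0 := by
  intro n hn
  rw [comap_norm_atTop] at hlim
  have hΨ : AnalyticOnNhd ℂ Ψ {z : ℂ | R < ‖z‖} :=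
    hΨ.analyticOnNhd (isOpen_lt continuous_const continuous_norm)
  have hderiv_bdd : ∀ᶠ z in cobounded ℂ, ‖deriv Ψ z‖ ≤ 3 * 2 :=
    eventually_norm_deriv_le_of_norm_le_mul_norm
      ((eventually_cobounded_le_norm (R + 1)).mono fun z hz =>
        (hΨ z (show R < ‖z‖ by linarith)).differentiableAt)
      (eventually_norm_le_mul_norm_of_tendsto_div_id one_lt_two hlim)
  have hpow : Tendsto (fun z : ℂ => z ^ (-(n : ℤ))) (cobounded ℂ) (𝓝 0) := by
    simpa [zero_pow (Nat.one_le_iff_ne_zero.1 hn)] using (tendsto_inv₀_cobounded (α := ℂ)).pow n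
  refine circleIntegral_eq_zero_of_tendsto_smul_cobounded (hR.trans hρ) (fun z hz => ?_) ?_
  · have hzR : R < ‖z‖ := hρ.trans_le hz
    have hz0 : z ≠ 0 := norm_pos_iff.1 (hR.trans hzR)
    exact ((differentiableAt_zpow.2 (.inl hz0)).mul (hΨ.deriv z hzR).differentiableAt).div
      ((hΨ z hzR).differentiableAt.sub_const w) (sub_ne_zero.2 (hw z hz))
  · have hderiv_bdd' : IsBoundedUnder (· ≤ ·) (cobounded ℂ) (norm ∘ deriv Ψ) :=
      isBoundedUnder_of_eventually_le hderiv_bdd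
    have hdecay := (hpow.zero_mul_isBoundedUnder_le hderiv_bdd').mul
      (tendsto_id_div_sub_const_of_tendsto_div_id w hlim)
    rw [zero_mul] at hdecay
    exact hdecay.congr fun z => by rw [smul_eq_mul]; ring
end

section
/- Let R > 0 and let Ψ : ℂ → ℂ be holomorphic on {z ∈ ℂ : |z| > R} with Ψ(z)/z → 1 as |z| → ∞. Let ρ > R and let w ∈ ℂ be such that Ψ(z) ≠ w for every z with |z| ≥ ρ. Then the circle integral ∮_{|z|=ρ} Ψ′(z)/(Ψ(z) − w) dz equals 2πi. -/
/-!
By Cauchy's theorem on annuli, `r ↦ ∮_{|z|=r} Ψ'/(Ψ - w)` is constant on `[ρ, ∞)`, so it suffices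
to compute its limit as `r → ∞`. Cauchy's estimate on the disc of radius `|z|/2` about `z`, applied to
`Ψ(z) - z = o(|z|)`, gives `Ψ' → 1` at infinity, hence `z Ψ'(z)/(Ψ(z) - w) → 1`; writing the circle
integral of `F = Ψ'/(Ψ - w)` as `∫₀^{2π} i z F(z) dθ` with `z = re^{iθ}`, dominated convergence gives the limit `2πi`.
-/

open Filter Metric Bornology Asymptotics Topology Complex

theorem eventually_cobounded_forall_mem_closedBall_half {P : ℂ → Prop}
    (hP : ∀ᶠ z in cobounded ℂ, P z) :
    ∀ᶠ z in cobounded ℂ, ∀ ζ ∈ closedBall z (‖z‖ / 2), P ζ := by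
  rw [← comap_norm_atTop, eventually_comap, eventually_atTop] at hP ⊢
  obtain ⟨M, hM⟩ := hP
  refine ⟨2 * M, fun r hr z hz ζ hζ => hM _ ?_ ζ rfl⟩
  have := norm_sub_norm_le z ζ
  rw [mem_closedBall, dist_comm, dist_eq_norm] at hζ
  linarith

theorem norm_deriv_le_of_norm_le_mul_norm {E : Type*} [NormedAddCommGroup E] [NormedSpace ℂ E]
    {f : ℂ → E} {z : ℂ} {c : ℝ} (hz : z ≠ 0)
    (hd : DifferentiableOn ℂ f (closedBall z (‖z‖ / 2)))
    (hbound : ∀ ζ ∈ closedBall z (‖z‖ / 2), ‖f ζ‖ ≤ c * ‖ζ‖) :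
    ‖deriv f z‖ ≤ 3 * c := by
  have hr : 0 < ‖z‖ / 2 := by positivity
  have hc : 0 ≤ c := nonneg_of_mul_nonneg_left
    ((norm_nonneg _).trans (hbound z (mem_closedBall_self hr.le))) (norm_pos_iff.2 hz)
  have hsphere : ∀ ζ ∈ sphere z (‖z‖ / 2), ‖f ζ‖ ≤ c * (3 / 2 * ‖z‖) := fun ζ hζ => by
    have hζz : ‖ζ‖ ≤ 3 / 2 * ‖z‖ := by
      have := norm_le_norm_add_norm_sub' ζ z
      rw [mem_sphere, dist_eq_norm] at hζ
      linarith
    exact (hbound ζ (sphere_subset_closedBall hζ)).trans (by gcongr)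
  calc ‖deriv f z‖ ≤ c * (3 / 2 * ‖z‖) / (‖z‖ / 2) :=
        Complex.norm_deriv_le_of_forall_mem_sphere_norm_le hr
          (hd.diffContOnCl_ball subset_rfl) hsphere
    _ = 3 * c := by field_simp

theorem tendsto_deriv_cobounded_of_isLittleO {E : Type*} [NormedAddCommGroup E]
    [NormedSpace ℂ E] {f : ℂ → E} (hd : ∀ᶠ z in cobounded ℂ, DifferentiableAt ℂ f z)
    (ho : f =o[cobounded ℂ] fun z => z) :
    Tendsto (deriv f) (cobounded ℂ) (𝓝 0) := by
  refine Metric.tendsto_nhds.2 fun ε hε => ?_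
  filter_upwards [eventually_cobounded_forall_mem_closedBall_half hd,
    eventually_cobounded_forall_mem_closedBall_half (ho.def (by positivity : 0 < ε / 6)),
    eventually_ne_cobounded 0] with z hdz hfz hz
  rw [dist_zero_right]
  calc ‖deriv f z‖ ≤ 3 * (ε / 6) :=
        norm_deriv_le_of_norm_le_mul_norm hz (fun ζ hζ => (hdz ζ hζ).differentiableWithinAt) hfz
    _ < ε := by linarith

theorem tendsto_deriv_cobounded_of_tendsto_div {f : ℂ → ℂ}
    (hd : ∀ᶠ z in cobounded ℂ, DifferentiableAt ℂ f z)
    (hf : Tendsto (fun z => f z / z) (cobounded ℂ) (𝓝 1)) :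
    Tendsto (deriv f) (cobounded ℂ) (𝓝 1) := by
  have ho : (fun z => f z - z) =o[cobounded ℂ] fun z => z :=
    (isEquivalent_of_tendsto_one hf).isLittleO
  have h := (tendsto_deriv_cobounded_of_isLittleO (f := fun z => f z - z)
    (hd.mono fun z hz => hz.sub differentiableAt_id) ho).add_const 1
  rw [zero_add] at h
  refine h.congr' ?_
  filter_upwards [hd] with z hz
  rw [deriv_fun_sub hz differentiableAt_fun_id, deriv_id'', sub_add_cancel]

theorem tendsto_mul_deriv_div_sub_cobounded {f : ℂ → ℂ} (w : ℂ)
    (hd : ∀ᶠ z in cobounded ℂ, DifferentiableAt ℂ f z)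
    (hf : Tendsto (fun z => f z / z) (cobounded ℂ) (𝓝 1)) :
    Tendsto (fun z => z * (deriv f z / (f z - w))) (cobounded ℂ) (𝓝 1) := by
  have hden : Tendsto (fun z => f z / z - w * z⁻¹) (cobounded ℂ) (𝓝 1) := by
    simpa using hf.sub (tendsto_inv₀_cobounded.const_mul w)
  have h := (tendsto_deriv_cobounded_of_tendsto_div hd hf).div hden one_ne_zero
  rw [div_one] at h
  refine h.congr' ?_
  filter_upwards [eventually_ne_cobounded 0] with z hz
  simp only [Pi.div_apply]
  field_simp

theorem eventually_atTop_forall_circleMap {P : ℂ → Prop} (hP : ∀ᶠ z in cobounded ℂ, P z) :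
    ∀ᶠ r in atTop, ∀ θ, P (circleMap 0 r θ) := by
  rw [← comap_norm_atTop, eventually_comap, eventually_atTop] at hP
  obtain ⟨M, hM⟩ := hP
  filter_upwards [eventually_ge_atTop M, eventually_ge_atTop 0] with r hrM hr0 θ
  exact hM _ (by rwa [norm_circleMap_zero, abs_of_nonneg hr0]) _ rfl

theorem tendsto_circleIntegral_atTop_of_tendsto_smul {E : Type*} [NormedAddCommGroup E]
    [NormedSpace ℂ E] [CompleteSpace E] {f : ℂ → E} {c : E}
    (hf : Tendsto (fun z => z • f z) (cobounded ℂ) (𝓝 c))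
    (hint : ∀ᶠ r in atTop, CircleIntegrable f 0 r) :
    Tendsto (fun r => ∮ z in C(0, r), f z) atTop (𝓝 ((2 * Real.pi * I) • c)) := by
  have hintegrand : ∀ r θ, deriv (circleMap 0 r) θ • f (circleMap 0 r θ) =
      I • circleMap 0 r θ • f (circleMap 0 r θ) := fun r θ => by
    rw [deriv_circleMap, mul_comm, mul_smul]
  have hconst_integral : (2 * Real.pi * I) • c = ∫ _ in (0 : ℝ)..2 * Real.pi, I • c := by
    rw [intervalIntegral.integral_const, sub_zero, ← Complex.coe_smul, smul_smul]
    push_cast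
    ring_nf
  rw [hconst_integral]
  refine intervalIntegral.tendsto_integral_filter_of_dominated_convergence (fun _ => ‖c‖ + 1)
    ?_ ?_ intervalIntegrable_const (.of_forall fun θ _ => ?_)
  · filter_upwards [hint] with r hr
    rw [Set.uIoc_of_le Real.two_pi_pos.le]
    exact hr.out.aestronglyMeasurable
  · filter_upwards [eventually_atTop_forall_circleMap (hf.norm.eventually
      (eventually_le_nhds (lt_add_one ‖c‖)))] with r hr
    refine .of_forall fun θ _ => ?_
    rw [hintegrand, norm_smul, norm_I, one_mul]
    exact hr θ
  · simp only [hintegrand]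
    refine (hf.comp (tendsto_def.2 fun s hs => ?_)).const_smul I
    exact (eventually_atTop_forall_circleMap hs).mono fun r h => h θ

theorem circleIntegral_eq_of_tendsto_smul {E : Type*} [NormedAddCommGroup E]
    [NormedSpace ℂ E] [CompleteSpace E] {f : ℂ → E} {c : E} {ρ : ℝ} (hρ : 0 < ρ)
    (hd : ∀ z : ℂ, ρ ≤ ‖z‖ → DifferentiableAt ℂ f z)
    (hf : Tendsto (fun z => z • f z) (cobounded ℂ) (𝓝 c)) :
    (∮ z in C(0, ρ), f z) = (2 * Real.pi * I) • c := by
  have hconst : ∀ r, ρ ≤ r → (∮ z in C(0, r), f z) = ∮ z in C(0, ρ), f z := fun r hr =>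
    Complex.circleIntegral_eq_of_differentiable_on_annulus_off_countable hρ hr
      Set.countable_empty
      (fun z hz => (hd z (by simpa using hz.2)).continuousAt.continuousWithinAt)
      (fun z hz => hd z (not_le.1 (mem_closedBall_zero_iff.not.1 hz.1.2)).le)
  have hint : ∀ᶠ r in atTop, CircleIntegrable f 0 r := by
    filter_upwards [eventually_ge_atTop ρ] with r hr
    refine ContinuousOn.circleIntegrable (hρ.le.trans hr) fun z hz => ?_
    exact (hd z (by rwa [mem_sphere_zero_iff_norm.1 hz])).continuousAt.continuousWithinAt
  exact tendsto_nhds_unique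
    (tendsto_const_nhds.congr' ((eventually_ge_atTop ρ).mono fun r hr => (hconst r hr).symm))
    (tendsto_circleIntegral_atTop_of_tendsto_smul hf hint)

/-- Winding-number identity: the circle integral of `Ψ'(z)/(Ψ(z) - w)` over `|z| = ρ`
equals `2πi` when `w` is not attained by `Ψ` on `{|z| ≥ ρ}`. -/
theorem circleIntegral_logDeriv_eq_two_pi_I
    (R : ℝ) (hR : 0 < R) (Ψ : ℂ → ℂ)
    (hΨ : DifferentiableOn ℂ Ψ {z : ℂ | R < ‖z‖})
    (hlim : Tendsto (fun z : ℂ => Ψ z / z) (comap norm atTop) (nhds 1))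
    (ρ : ℝ) (hρ : R < ρ) (w : ℂ)
    (hw : ∀ z : ℂ, ρ ≤ ‖z‖ → Ψ z ≠ w) :
    (∮ z in C(0, ρ), deriv Ψ z / (Ψ z - w)) = 2 * Real.pi * Complex.I := by
  rw [comap_norm_atTop] at hlim
  have hU : IsOpen {z : ℂ | R < ‖z‖} := isOpen_lt continuous_const continuous_norm
  have hΨd : ∀ z : ℂ, R < ‖z‖ → DifferentiableAt ℂ Ψ z := fun z hz =>
    hΨ.differentiableAt (hU.mem_nhds hz)
  have hF : ∀ z : ℂ, ρ ≤ ‖z‖ → DifferentiableAt ℂ (fun z => deriv Ψ z / (Ψ z - w)) z :=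
    fun z hz =>
      have hRz : R < ‖z‖ := hρ.trans_le hz
      ((hΨ.deriv hU).differentiableAt (hU.mem_nhds hRz)).div ((hΨd z hRz).sub_const w)
        (sub_ne_zero.2 (hw z hz))
  have hinf := tendsto_mul_deriv_div_sub_cobounded w
    ((tendsto_norm_cobounded_atTop.eventually_gt_atTop R).mono hΨd) hlim
  simpa using circleIntegral_eq_of_tendsto_smul (hR.trans hρ) hF hinf
end

section
/- Let R > 0 and let Ψ : ℂ → ℂ be holomorphic on {z ∈ ℂ : |z| > R} with |Ψ(z)| → ∞ as |z| → ∞. Suppose G is a complex polynomial and (d_k)_{k≥1} are complex numbers such that for every z with |z| > R the series Σ_{k≥1} d_k z^{−k} converges unconditionally (HasSum) with sum −G(Ψ(z)), i.e. G(Ψ(z)) + Σ_{k≥1} d_k z^{−k} = 0 for all |z| > R. Then G is the zero polynomial and d_k = 0 for every k ≥ 1. -/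
open Filter

/-- Auxiliary: shifted coefficients. -/
noncomputable def faberAuxCoeff (d : ℕ → ℂ) : ℕ → ℂ := fun n => if n = 0 then 0 else d n

lemma faberAux_hasSum (R : ℝ) (hR : 0 < R) (d : ℕ → ℂ) (s : ℂ → ℂ)
    (hser : ∀ z : ℂ, R < ‖z‖ → HasSum (fun k : ℕ => d (k + 1) / z ^ (k + 1)) (s z))
    {w : ℂ} (hw : w ≠ 0) (hw' : ‖w‖ < R⁻¹) :
    HasSum (fun n => faberAuxCoeff d n * w ^ n) (s w⁻¹) := by
  have hwpos : 0 < ‖w‖ := norm_pos_iff.mpr hw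
  have hz : R < ‖w⁻¹‖ := by
    rw [norm_inv]
    simpa using inv_strictAnti₀ hwpos hw'
  have h := hser w⁻¹ hz
  have h' : HasSum (fun k : ℕ => faberAuxCoeff d (k + 1) * w ^ (k + 1)) (s w⁻¹) := by
    refine h.congr_fun fun k => ?_
    simp [faberAuxCoeff, div_eq_mul_inv, inv_pow]
  have := (hasSum_nat_add_iff (f := fun n => faberAuxCoeff d n * w ^ n) 1).mp h'
  simpa [faberAuxCoeff] using this

/-- Uniqueness of Faber-type decompositions: if a polynomial part in `Ψ(z)` plus a
vanishing tail of negative powers of `z` is identically zero on `{|z| > R}`, then the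
polynomial and all tail coefficients vanish. -/
theorem faber_decomposition_unique
    (R : ℝ) (hR : 0 < R) (Ψ : ℂ → ℂ)
    (hΨ : DifferentiableOn ℂ Ψ {z : ℂ | R < ‖z‖})
    (hinf : Tendsto (fun z : ℂ => ‖Ψ z‖) (comap norm atTop) atTop)
    (G : Polynomial ℂ) (d : ℕ → ℂ)
    (hser : ∀ z : ℂ, R < ‖z‖ →
      HasSum (fun k : ℕ => d (k + 1) / z ^ (k + 1)) (-(G.eval (Ψ z)))) :
    G = 0 ∧ ∀ k : ℕ, 1 ≤ k → d k = 0 := by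
  set F : Filter ℂ := comap norm atTop with hF
  haveI : F.NeBot := by rw [hF, comap_norm_atTop]; infer_instance
  set a : ℕ → ℂ := faberAuxCoeff d with ha
  set g : ℂ → ℂ := fun w => ∑' n, a n * w ^ n with hg
  have hRinv : 0 < R⁻¹ := inv_pos.mpr hR
  have key : ∀ w : ℂ, w ≠ 0 → ‖w‖ < R⁻¹ →
      HasSum (fun n => a n * w ^ n) (-(G.eval (Ψ w⁻¹))) :=
    fun w hw hw' => faberAux_hasSum R hR d _ hser hw hw'
  have key0 : HasSum (fun n => a n * (0:ℂ) ^ n) 0 := by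
    have h0 : ∀ n, n ≠ 0 → a n * (0:ℂ) ^ n = 0 := by
      intro n hn; simp [zero_pow hn]
    simpa [ha, faberAuxCoeff] using hasSum_single (f := fun n => a n * (0:ℂ)^n) 0
      (fun b hb => h0 b hb)
  have keyg : ∀ w : ℂ, ‖w‖ < R⁻¹ → HasSum (fun n => a n * w ^ n) (g w) := by
    intro w hw
    rcases eq_or_ne w 0 with rfl | hw0
    · exact key0.summable.hasSum
    · exact ((key w hw0 hw).summable).hasSum
  have hg0 : g 0 = 0 := key0.tsum_eq
  -- the formal power series
  set p : FormalMultilinearSeries ℂ ℂ ℂ := FormalMultilinearSeries.ofScalars ℂ a with hp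
  -- radius bound
  set r : NNReal := Real.toNNReal (R⁻¹ / 2) with hr
  have hrR : (r : ℝ) = R⁻¹ / 2 := Real.coe_toNNReal _ (by positivity)
  have hrlt : (r : ℝ) < R⁻¹ := by rw [hrR]; linarith
  have hrpos : 0 < (r : ℝ) := by rw [hrR]; positivity
  have hw₀ : ‖((r:ℝ) : ℂ)‖ < R⁻¹ := by
    rwa [Complex.norm_real, Real.norm_of_nonneg hrpos.le]
  have hsum₀ : Summable (fun n => a n * ((r:ℝ):ℂ) ^ n) := (keyg _ hw₀).summable
  obtain ⟨C, hC⟩ : ∃ C, ∀ n, ‖a n * ((r:ℝ):ℂ) ^ n‖ ≤ C :=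
    hsum₀.tendsto_atTop_zero.norm.bddAbove_range.imp
      (fun C hC n => hC ⟨n, rfl⟩)
  have hle : (↑r : ENNReal) ≤ p.radius := by
    apply p.le_radius_of_bound C
    intro n
    have hn : ‖p n‖ = ‖a n‖ := FormalMultilinearSeries.ofScalars_norm ℂ a n
    rw [hn]
    calc ‖a n‖ * (r:ℝ) ^ n = ‖a n * ((r:ℝ):ℂ) ^ n‖ := by
          rw [norm_mul, norm_pow, Complex.norm_real, Real.norm_of_nonneg hrpos.le]
      _ ≤ C := hC n
  have hball : HasFPowerSeriesOnBall g p 0 r := by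
    refine ⟨hle, by exact_mod_cast hrpos, ?_⟩
    intro y hy
    rw [EMetric.mem_ball, edist_zero_right] at hy
    have hy' : ‖y‖ < (r : ℝ) := by exact_mod_cast hy
    have h2 : (fun n => p n fun _ => y) = fun n => a n * y ^ n := by
      funext n
      rw [hp, FormalMultilinearSeries.ofScalars_apply_eq, smul_eq_mul]
    rw [zero_add, h2]
    exact keyg y (hy'.trans hrlt)
  have hcont : ContinuousAt g 0 := by
    exact hball.continuousOn.continuousAt (EMetric.isOpen_ball.mem_nhds
      (EMetric.mem_ball_self (by exact_mod_cast hrpos)))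
  -- z⁻¹ → 0 along F
  have hinv : Tendsto (fun z : ℂ => z⁻¹) F (nhds 0) := by
    rw [hF, comap_norm_atTop]
    exact tendsto_inv₀_cobounded
  have hevent : ∀ᶠ z in F, R < ‖z‖ := tendsto_comap.eventually (eventually_gt_atTop R)
  have heq : ∀ᶠ z in F, g z⁻¹ = -(G.eval (Ψ z)) := by
    filter_upwards [hevent] with z hz
    have hz0 : z ≠ 0 := by
      intro h; rw [h, norm_zero] at hz; exact absurd hz (not_lt.mpr hR.le)
    have hzinv : ‖z⁻¹‖ < R⁻¹ := by
      rw [norm_inv]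
      exact inv_strictAnti₀ hR hz
    have hs := key z⁻¹ (inv_ne_zero hz0) hzinv
    rw [inv_inv] at hs
    exact hs.tsum_eq
  have hGlim : Tendsto (fun z : ℂ => G.eval (Ψ z)) F (nhds 0) := by
    have h1 : Tendsto (fun z : ℂ => g z⁻¹) F (nhds 0) := by
      rw [← hg0]
      exact hcont.tendsto.comp hinv
    have h2 : Tendsto (fun z : ℂ => -(G.eval (Ψ z))) F (nhds 0) := h1.congr' heq
    simpa using h2.neg
  -- G = 0
  have hGzero : G = 0 := by
    rcases lt_or_ge 0 G.degree with hdeg | hdeg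
    · exfalso
      have hcomp : Tendsto (fun z : ℂ => ‖G.eval (Ψ z)‖) F atTop :=
        G.tendsto_norm_atTop hdeg hinf
      exact not_tendsto_atTop_of_tendsto_nhds hGlim.norm (by simpa using hcomp)
    · have hc : G = Polynomial.C (G.coeff 0) := Polynomial.eq_C_of_degree_le_zero hdeg
      have : G.coeff 0 = 0 := by
        have h1 : Tendsto (fun _ : ℂ => G.coeff 0) F (nhds (G.coeff 0)) := tendsto_const_nhds
        have h2 : Tendsto (fun _ : ℂ => G.coeff 0) F (nhds 0) := by
          rw [hc] at hGlim
          simpa using hGlim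
        exact tendsto_nhds_unique h1 h2
      rw [hc, this, map_zero]
  -- coefficients vanish
  have hgz : g =ᶠ[nhds 0] 0 := by
    have hball0 : Metric.ball (0:ℂ) R⁻¹ ∈ nhds (0:ℂ) := Metric.ball_mem_nhds _ hRinv
    filter_upwards [hball0] with w hw
    rw [Metric.mem_ball, dist_zero_right] at hw
    rcases eq_or_ne w 0 with rfl | hw0
    · exact hg0
    · have hs := key w hw0 hw
      rw [hGzero] at hs
      simpa using hs.tsum_eq
  have hpz : p = 0 := hball.hasFPowerSeriesAt.eq_zero_of_eventually hgz
  have haz : a = 0 := by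
    rwa [hp, FormalMultilinearSeries.ofScalars_series_eq_zero] at hpz
  refine ⟨hGzero, fun k hk => ?_⟩
  have : a k = 0 := by rw [haz]; rfl
  rwa [ha, faberAuxCoeff, if_neg (by omega)] at this
end

section
/- Let P be a monic complex polynomial of degree n ≥ 1, let R > 0, and let Ψ : ℂ → ℂ be holomorphic on {z ∈ ℂ : |z| > R} with P(Ψ(z)) = z^n for all |z| > R. Let k ≥ 1 be an integer, F a complex polynomial, and (c_l)_{l≥1} complex numbers such that for every z with |z| > R the series Σ_{l≥1} c_l z^{−l} converges unconditionally (HasSum) with sum F(Ψ(z)) − z^{nk}. Then F = P^k and c_l = 0 for every l ≥ 1. -/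
/-!
Put `Q = F - P ^ k`. Since `P (Ψ z) = z ^ n`, the hypothesis says that `Q (Ψ z)` is the sum of
`∑_{l ≥ 1} c_l z^{-l}`, a power series in `w = z⁻¹` without constant term; hence `Q (Ψ z) → 0`
as `z → ∞`. But `Ψ z → ∞` (because `P (Ψ z) = z ^ n` does), and a polynomial tending to `0` along a
sequence tending to `∞` is zero. So `F = P ^ k`, the power series sums to `0` on a punctured disc,
and by the identity theorem for power series all `c_l` vanish.
-/

open Filter Topology Bornology FormalMultilinearSeries

section InvPowSeries

variable {𝕜 : Type*} [NontriviallyNormedField 𝕜]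

/-- The power series `∑_{l ≥ 1} a l • w ^ l`, which is `∑ a l / z ^ l` in the variable `w = z⁻¹`;
the value `a 0` is discarded. -/
noncomputable def invPowSeries (a : ℕ → 𝕜) : FormalMultilinearSeries 𝕜 𝕜 𝕜 :=
  ofScalars 𝕜 (Function.update a 0 0)

variable {a : ℕ → 𝕜} {R : ℝ} {s : 𝕜 → 𝕜}

lemma invPowSeries_apply_zero (j : ℕ) : invPowSeries a j (fun _ => 0) = 0 := by
  cases j <;> simp [invPowSeries]

lemma sum_invPowSeries_zero : (invPowSeries a).sum 0 = 0 := by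
  simp only [FormalMultilinearSeries.sum, invPowSeries_apply_zero, tsum_zero]

lemma hasSum_invPowSeries_inv {z t : 𝕜} (h : HasSum (fun l => a (l + 1) / z ^ (l + 1)) t) :
    HasSum (fun j => invPowSeries a j (fun _ => z⁻¹)) t := by
  rw [← hasSum_nat_add_iff' 1]
  simpa [invPowSeries, ofScalars_apply_eq, div_eq_inv_mul] using h

lemma hasFPowerSeriesAt_invPowSeries
    (h : ∀ z, R < ‖z‖ → HasSum (fun l => a (l + 1) / z ^ (l + 1)) (s z)) :
    HasFPowerSeriesAt (invPowSeries a).sum (invPowSeries a) 0 := by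
  obtain ⟨z₀, hz₀⟩ := NormedField.exists_lt_norm 𝕜 (max R 0)
  have hz₀R : R < ‖z₀‖ := (le_max_left _ _).trans_lt hz₀
  have hz₀ne : z₀ ≠ 0 := norm_pos_iff.mp ((le_max_right _ _).trans_lt hz₀)
  refine ⟨‖z₀⁻¹‖₊, ?_, by simpa using hz₀ne, fun {w} hw => ?_⟩
  · refine (invPowSeries a).le_radius_of_tendsto (l := 0) ?_
    simpa [invPowSeries, ofScalars_apply_eq, norm_smul, ofScalars_norm, mul_comm] using
      (hasSum_invPowSeries_inv (h z₀ hz₀R)).summable.tendsto_atTop_zero.norm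
  rw [zero_add]
  refine Summable.hasSum ?_
  rcases eq_or_ne w 0 with rfl | hw0
  · simp only [invPowSeries_apply_zero, summable_zero]
  · have hw : ‖w‖ < ‖z₀‖⁻¹ := by
      simpa [← enorm_eq_nnnorm, ← ofReal_norm, ENNReal.ofReal_lt_ofReal_iff_of_nonneg] using hw
    have hwR : R < ‖w⁻¹‖ := by
      rw [norm_inv]
      exact hz₀R.trans ((lt_inv_comm₀ (norm_pos_iff.2 hw0) (norm_pos_iff.2 hz₀ne)).mp hw)
    simpa using (hasSum_invPowSeries_inv (h w⁻¹ hwR)).summable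

lemma sum_invPowSeries_eventuallyEq
    (h : ∀ z, R < ‖z‖ → HasSum (fun l => a (l + 1) / z ^ (l + 1)) (s z)) :
    (invPowSeries a).sum =ᶠ[𝓝[≠] 0] fun w => s w⁻¹ := by
  filter_upwards [tendsto_inv₀_nhdsNE_zero.eventually
    (tendsto_norm_cobounded_atTop.eventually_gt_atTop R)] with w hw
  simpa only [FormalMultilinearSeries.sum, inv_inv] using
    (hasSum_invPowSeries_inv (h w⁻¹ hw)).tsum_eq

lemma tendsto_zero_of_hasSum_div_pow_s10
    (h : ∀ z, R < ‖z‖ → HasSum (fun l => a (l + 1) / z ^ (l + 1)) (s z)) :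
    Tendsto s (cobounded 𝕜) (𝓝 0) := by
  have hcont := (hasFPowerSeriesAt_invPowSeries h).continuousAt
  rw [ContinuousAt, sum_invPowSeries_zero] at hcont
  have hinv : Tendsto (fun w => s w⁻¹) (𝓝[≠] 0) (𝓝 0) :=
    (hcont.mono_left nhdsWithin_le_nhds).congr' (sum_invPowSeries_eventuallyEq h)
  simpa only [Function.comp_def, inv_inv] using hinv.comp tendsto_inv₀_cobounded'

lemma eq_zero_of_hasSum_div_pow_zero_s10
    (h : ∀ z, R < ‖z‖ → HasSum (fun l => a (l + 1) / z ^ (l + 1)) 0) (l : ℕ) :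
    a (l + 1) = 0 := by
  have hzero : (invPowSeries a).sum =ᶠ[𝓝 0] 0 := by
    rw [← nhdsNE_sup_pure, EventuallyEq, eventually_sup]
    exact ⟨sum_invPowSeries_eventuallyEq h, sum_invPowSeries_zero⟩
  have hp := (hasFPowerSeriesAt_invPowSeries h).eq_zero_of_eventually hzero
  simpa [invPowSeries, ofScalars_eq_zero] using congrArg (· (l + 1)) hp

end InvPowSeries

namespace Polynomial

variable {α 𝕜 : Type*} [NormedField 𝕜] {l : Filter α} {f : α → 𝕜}

lemma eq_zero_of_tendsto_eval_zero_s10 [l.NeBot] {Q : 𝕜[X]} (hf : Tendsto f l (cobounded 𝕜))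
    (hQ : Tendsto (fun x => Q.eval (f x)) l (𝓝 0)) : Q = 0 := by
  rcases le_or_gt Q.degree 0 with hd | hd
  · rw [eq_C_of_degree_le_zero hd] at hQ ⊢
    simpa [tendsto_const_nhds_iff] using hQ
  · exact absurd (Q.tendsto_norm_atTop hd (tendsto_norm_atTop_iff_cobounded.mpr hf))
      (not_tendsto_atTop_of_tendsto_nhds hQ.norm)

lemma tendsto_cobounded_of_tendsto_eval [ProperSpace 𝕜] (P : 𝕜[X])
    (hP : Tendsto (fun x => P.eval (f x)) l (cobounded 𝕜)) : Tendsto f l (cobounded 𝕜) := by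
  rw [Metric.cobounded_eq_cocompact] at hP ⊢
  exact hP.of_tendsto_comp (comap_cocompact_le P.continuous)

end Polynomial

theorem lemniscate_faber_and_grunsky_general
    (P : Polynomial ℂ) (n : ℕ) (hn : 1 ≤ n)
    (R : ℝ) (Ψ : ℂ → ℂ)
    (hP : ∀ z : ℂ, R < ‖z‖ → P.eval (Ψ z) = z ^ n)
    (k : ℕ) (F : Polynomial ℂ) (c : ℕ → ℂ)
    (hser : ∀ z : ℂ, R < ‖z‖ →
      HasSum (fun l : ℕ => c (l + 1) / z ^ (l + 1)) (F.eval (Ψ z) - z ^ (n * k))) :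
    F = P ^ k ∧ ∀ l : ℕ, 1 ≤ l → c l = 0 := by
  have hΨ : Tendsto Ψ (cobounded ℂ) (cobounded ℂ) := by
    refine P.tendsto_cobounded_of_tendsto_eval
      ((tendsto_pow_cobounded_cobounded (Nat.one_le_iff_ne_zero.mp hn)).congr' ?_)
    filter_upwards [tendsto_norm_cobounded_atTop.eventually_gt_atTop R] with z hz
    exact (hP z hz).symm
  have hserQ : ∀ z : ℂ, R < ‖z‖ →
      HasSum (fun l : ℕ => c (l + 1) / z ^ (l + 1)) ((F - P ^ k).eval (Ψ z)) := by
    intro z hz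
    simpa [hP z hz, pow_mul] using hser z hz
  have hQ : F - P ^ k = 0 :=
    Polynomial.eq_zero_of_tendsto_eval_zero_s10 hΨ (tendsto_zero_of_hasSum_div_pow_s10 hserQ)
  refine ⟨sub_eq_zero.mp hQ, fun l hl => ?_⟩
  obtain ⟨l, rfl⟩ := Nat.exists_eq_add_of_le' hl
  exact eq_zero_of_hasSum_div_pow_zero_s10 (fun z hz => by simpa [hQ] using hserQ z hz) l

/-- For a lemniscate with exterior map `Ψ` satisfying `P(Ψ(z)) = z^n` for a monic
polynomial `P` of degree `n`, the Faber polynomial of degree `nk` is `P^k` and all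
Grunsky coefficients `c_{nk, l}` vanish. -/
theorem lemniscate_faber_and_grunsky
    (P : Polynomial ℂ) (n : ℕ) (hn : 1 ≤ n) (hmonic : P.Monic)
    (hdeg : P.natDegree = n)
    (R : ℝ) (hR : 0 < R) (Ψ : ℂ → ℂ)
    (hΨ : DifferentiableOn ℂ Ψ {z : ℂ | R < ‖z‖})
    (hP : ∀ z : ℂ, R < ‖z‖ → P.eval (Ψ z) = z ^ n)
    (k : ℕ) (hk : 1 ≤ k) (F : Polynomial ℂ) (c : ℕ → ℂ)
    (hser : ∀ z : ℂ, R < ‖z‖ →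
      HasSum (fun l : ℕ => c (l + 1) / z ^ (l + 1)) (F.eval (Ψ z) - z ^ (n * k))) :
    F = P ^ k ∧ ∀ l : ℕ, 1 ≤ l → c l = 0 :=
  lemniscate_faber_and_grunsky_general P n hn R Ψ hP k F c hser
end

section
/- Let n ≥ 0 be an integer. For a ∈ ℂ and k ∈ ℕ let binom(a, k) = a(a−1)⋯(a−k+1)/k! denote the generalized binomial coefficient. Define F(w) = Σ_{j=0}^{n} (−1)^{n−j} binom((2n+1)/2, n−j) · w^{2j+1}. Then for every w ∈ ℂ with |w| > 1, the series Σ_{k=0}^{∞} (−1)^{n+k+1} binom((2n+1)/2, n+k+1) · w^{−(2k+1)} converges unconditionally (HasSum) with sum (w · (1 − w^{−2})^{1/2})^{2n+1} − F(w), where (1 − w^{−2})^{1/2} is computed with the principal branch of the complex power. -/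
/-!
Since `(z ^ (1/2)) ^ m = z ^ (m/2)` holds for the principal branch without restriction,
`Φ(w) ^ (2n+1) = w ^ (2n+1) (1 - w⁻²) ^ ((2n+1)/2)`. Expanding the last factor by the binomial
series in `x = -w⁻²` (which has `‖x‖ < 1`) gives a Laurent series in `w` whose terms with
`k ≤ n` carry the odd powers `w ^ (2(n-k)+1)` and make up `F`, while those with `k > n` carry
the negative odd powers and form the tail.
-/

/-- The generalized binomial coefficient `binom(a, k) = a(a-1)⋯(a-k+1)/k!`. -/
noncomputable def genBinom (a : ℂ) (k : ℕ) : ℂ :=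
  (∏ i ∈ Finset.range k, (a - i)) / (k.factorial : ℂ)

theorem genBinom_eq_choose (a : ℂ) (k : ℕ) : genBinom a k = Ring.choose a k := by
  rw [Ring.choose_eq_smul, genBinom, ← descPochhammer_eval_eq_prod_range, smul_eq_mul,
    ← descPochhammer_map (algebraMap ℤ ℂ), Polynomial.eval_map_algebraMap,
    Polynomial.aeval_eq_smeval, div_eq_inv_mul]

theorem hasSum_genBinom_mul_pow (a : ℂ) {x : ℂ} (hx : ‖x‖ < 1) :
    HasSum (fun k => genBinom a k * x ^ k) ((1 + x) ^ a) := by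
  have := Complex.one_add_cpow_hasFPowerSeriesOnBall_zero (a := a) |>.hasSum
    (y := x) (by simpa [← ofReal_norm] using hx)
  simpa [genBinom_eq_choose, binomialSeries, FormalMultilinearSeries.ofScalars_apply_eq,
    mul_comm] using this

theorem cpow_one_half_pow (z : ℂ) (m : ℕ) : (z ^ (1 / 2 : ℂ)) ^ m = z ^ ((m : ℂ) / 2) := by
  rw [← Complex.cpow_nat_mul, mul_one_div]

theorem pow_mul_neg_inv_sq_pow {K : Type*} [Field K] {w : K} (hw : w ≠ 0) (m k : ℕ) :
    w ^ m * (-(w ^ 2)⁻¹) ^ k = (-1) ^ k * w ^ ((m : ℤ) - 2 * k) := by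
  rw [zpow_sub₀ hw, neg_pow, inv_pow, ← pow_mul]
  norm_cast
  ring

theorem norm_neg_inv_sq_lt_one {K : Type*} [NormedDivisionRing K] {w : K} (hw : 1 < ‖w‖) :
    ‖-(w ^ 2)⁻¹‖ < 1 := by
  rw [norm_neg, norm_inv, norm_pow]
  exact inv_lt_one_of_one_lt₀ (one_lt_pow₀ hw two_ne_zero)

/-- Faber decomposition for the Cassini oval: for `|w| > 1`,
`(w(1 - w⁻²)^{1/2})^{2n+1} = F_{2n+1}(w) + Σ_{k≥0} (-1)^{n+k+1} binom((2n+1)/2, n+k+1) w^{-(2k+1)}`,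
where `F_{2n+1}(w) = Σ_{j=0}^{n} (-1)^{n-j} binom((2n+1)/2, n-j) w^{2j+1}` is the
Faber polynomial. -/
theorem cassini_faber_decomposition (n : ℕ) :
    ∀ w : ℂ, 1 < ‖w‖ →
      HasSum
        (fun k : ℕ => (-1 : ℂ) ^ (n + k + 1) *
          genBinom ((2 * (n : ℂ) + 1) / 2) (n + k + 1) / w ^ (2 * k + 1))
        ((w * ((1 - (w ^ 2)⁻¹) ^ ((1 : ℂ) / 2))) ^ (2 * n + 1) -
          ∑ j ∈ Finset.range (n + 1),
            (-1 : ℂ) ^ (n - j) * genBinom ((2 * (n : ℂ) + 1) / 2) (n - j) * w ^ (2 * j + 1)) := by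
  intro w hw
  have hw0 : w ≠ 0 := norm_pos_iff.mp (one_pos.trans hw)
  set a : ℂ := (2 * (n : ℂ) + 1) / 2
  set f : ℕ → ℂ := fun k => w ^ (2 * n + 1) * (genBinom a k * (-(w ^ 2)⁻¹) ^ k)
  have hf : HasSum f ((w * (1 - (w ^ 2)⁻¹) ^ (1 / 2 : ℂ)) ^ (2 * n + 1)) := by
    have hexp : ((2 * n + 1 : ℕ) : ℂ) / 2 = a := by push_cast; rfl
    rw [mul_pow, cpow_one_half_pow, hexp, sub_eq_add_neg]
    exact (hasSum_genBinom_mul_pow a (norm_neg_inv_sq_lt_one hw)).mul_left _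
  have head : ∀ j ∈ Finset.range (n + 1),
      f (n - j) = (-1) ^ (n - j) * genBinom a (n - j) * w ^ (2 * j + 1) := by
    intro j hj
    have hjn : j ≤ n := Finset.mem_range_succ_iff.mp hj
    simp only [f, mul_left_comm _ (genBinom a _), pow_mul_neg_inv_sq_pow hw0]
    rw [show ((2 * n + 1 : ℕ) : ℤ) - 2 * (n - j : ℕ) = (2 * j + 1 : ℕ) by push_cast [hjn]; ring,
      zpow_natCast]
    ring
  have tail : ∀ k,
      f (k + (n + 1)) = (-1) ^ (n + k + 1) * genBinom a (n + k + 1) / w ^ (2 * k + 1) := by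
    intro k
    simp only [f, mul_left_comm _ (genBinom a _), pow_mul_neg_inv_sq_pow hw0]
    rw [show ((2 * n + 1 : ℕ) : ℤ) - 2 * (k + (n + 1) : ℕ) = -(2 * k + 1 : ℕ) by push_cast; ring,
      zpow_neg, zpow_natCast, show k + (n + 1) = n + k + 1 by ring]
    ring
  have hsplit := (hasSum_nat_add_iff' (n + 1)).mpr hf
  rw [← Finset.sum_range_reflect, Nat.add_sub_cancel, Finset.sum_congr rfl head] at hsplit
  simpa only [tail] using hsplit
end
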